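/- arXiv:0810.1793 — 9 statements merged into one kernel-verified Lean document; each statement's English description precedes it below -/
import Mathlib

section
/- Let J ≥ 1 and let B = { ±(e_{j1} + e_{j4} − e_{j2} − e_{j3}) : 1 ≤ j1 < j2 ≤ j3 < j4 ≤ J, j2 − j1 = j4 − j3 }. Then B is a Markov basis for the univariate Poisson regression configuration: for any x, y ∈ ℕ^J with Σ_{j=1}^J x_j = Σ_{j=1}^J y_j and Σ_{j=1}^J j·x_j = Σ_{j=1}^J j·y_j, there exists a finite sequence x = x^0, x^1, …, x^n = y of vectors in ℕ^J such that x^{i+1} − x^i ∈ B for every i (hence every x^i lies in the common fiber). -/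
/-!
Every table is joined by moves of `B` to a table supported on two adjacent indices: if the support
contains `a` and `d` with `d ≥ a + 2`, the move `e_{a+1} + e_{d-1} - e_a - e_d` keeps the table
nonnegative and lowers the potential `∑ⱼ j² xⱼ` by `2(d - a - 1)`. A table supported on `{k, k + 1}`
with `x_k > 0`, of size `N` and weight `M`, satisfies `M = kN + x_{k+1}` with `x_{k+1} < N`, so
`k = M / N` and `x_{k+1} = M % N`: it is the only such table in its fiber. As `B = -B`, the paths
from `x` and from `y` to this common table join.
-/

open Finset Relation

theorem Relation.ReflTransGen.exists_fin_chain {α : Type*} {r : α → α → Prop} {a b : α}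
    (h : ReflTransGen r a b) :
    ∃ (n : ℕ) (f : Fin (n + 1) → α),
      f 0 = a ∧ f (Fin.last n) = b ∧ ∀ i : Fin n, r (f i.castSucc) (f i.succ) := by
  induction h with
  | refl => exact ⟨0, fun _ => a, rfl, rfl, fun i => i.elim0⟩
  | @tail c d _ hcd ih =>
    obtain ⟨n, f, hf0, hfn, hstep⟩ := ih
    refine ⟨n + 1, Fin.snoc f d, ?_, Fin.snoc_last _ _, fun i => ?_⟩
    · rw [← Fin.castSucc_zero, Fin.snoc_castSucc, hf0]
    · induction i using Fin.lastCases with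
      | last => rwa [Fin.succ_last, Fin.snoc_last, Fin.snoc_castSucc, hfn]
      | cast i => simpa only [Fin.succ_castSucc, Fin.snoc_castSucc] using hstep i

namespace UnivariatePoisson

variable {J : ℕ}

def moveVec (j1 j2 j3 j4 : Fin J) : Fin J → ℤ :=
  Pi.single j1 1 + Pi.single j4 1 - Pi.single j2 1 - Pi.single j3 1

def moves (J : ℕ) : Set (Fin J → ℤ) :=
  {z | ∃ j1 j2 j3 j4 : Fin J, j1 < j2 ∧ j2 ≤ j3 ∧ j3 < j4 ∧
    (j2 : ℕ) - (j1 : ℕ) = (j4 : ℕ) - (j3 : ℕ) ∧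
    (z = moveVec j1 j2 j3 j4 ∨ z = -moveVec j1 j2 j3 j4)}

def Adj (x y : Fin J → ℕ) : Prop := (fun j => (y j : ℤ) - x j) ∈ moves J

def stat (x : Fin J → ℕ) : ℕ × ℕ := (∑ j : Fin J, x j, ∑ j : Fin J, ((j : ℕ) + 1) * x j)

def potential (x : Fin J → ℕ) : ℕ := ∑ j : Fin J, ((j : ℕ) + 1) ^ 2 * x j

lemma neg_mem_moves {z : Fin J → ℤ} (hz : z ∈ moves J) : -z ∈ moves J := by
  obtain ⟨j1, j2, j3, j4, h12, h23, h34, hd, rfl | rfl⟩ := hz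
  exacts [⟨j1, j2, j3, j4, h12, h23, h34, hd, Or.inr rfl⟩,
    ⟨j1, j2, j3, j4, h12, h23, h34, hd, Or.inl (neg_neg _)⟩]

instance : Std.Symm (Adj (J := J)) where
  symm x y h := by
    show (fun j => (x j : ℤ) - y j) ∈ moves J
    convert neg_mem_moves h using 1
    ext j
    simp

lemma sum_mul_moveVec (w : Fin J → ℤ) (j1 j2 j3 j4 : Fin J) :
    ∑ j, w j * moveVec j1 j2 j3 j4 j = w j1 + w j4 - w j2 - w j3 := by
  simp [moveVec, mul_add, mul_sub, sum_add_distrib, sum_sub_distrib, Pi.single_apply]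

lemma sum_affine_mul_eq_zero {z : Fin J → ℤ} (hz : z ∈ moves J) (c d : ℤ) :
    ∑ j : Fin J, (c * (j : ℕ) + d) * z j = 0 := by
  obtain ⟨j1, j2, j3, j4, h12, -, h34, hd, hz⟩ := hz
  have h : ((j1 : ℕ) : ℤ) + (j4 : ℕ) = (j2 : ℕ) + (j3 : ℕ) := by omega
  have hm : ∑ j : Fin J, (c * (j : ℕ) + d) * moveVec j1 j2 j3 j4 j = 0 := by
    rw [sum_mul_moveVec]
    linear_combination c * h
  rcases hz with rfl | rfl
  · exact hm
  · simp only [Pi.neg_apply, mul_neg, sum_neg_distrib, hm, neg_zero]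

lemma cast_sum_mul_sub (w x y : Fin J → ℕ) :
    ((∑ j, w j * y j : ℕ) : ℤ) - (∑ j, w j * x j : ℕ) = ∑ j, (w j : ℤ) * ((y j : ℤ) - x j) := by
  push_cast
  rw [← sum_sub_distrib]
  simp only [mul_sub]

lemma Adj.stat_eq {x y : Fin J → ℕ} (h : Adj x y) : stat x = stat y := by
  have hsize := cast_sum_mul_sub 1 x y
  have hweight := cast_sum_mul_sub (fun j => (j : ℕ) + 1) x y
  have h0 := sum_affine_mul_eq_zero h 0 1
  have h1 := sum_affine_mul_eq_zero h 1 1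
  simp only [Pi.one_apply, one_mul, Nat.cast_one, zero_mul, zero_add, Nat.cast_add] at *
  ext <;> simp only [stat] <;> omega

lemma stat_eq_of_reflTransGen {x y : Fin J → ℕ} (h : ReflTransGen Adj x y) : stat x = stat y := by
  induction h with
  | refl => rfl
  | tail _ hyz ih => exact ih.trans hyz.stat_eq

def IsConcentrated (x : Fin J → ℕ) : Prop :=
  ∀ a d : Fin J, x a ≠ 0 → x d ≠ 0 → (d : ℕ) ≤ a + 1

lemma exists_adj_of_nonneg {x : Fin J → ℕ} {z : Fin J → ℤ} (hz : z ∈ moves J)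
    (hxz : ∀ j, 0 ≤ (x j : ℤ) + z j) : ∃ y, Adj x y ∧ ∀ j, (y j : ℤ) - x j = z j := by
  have hy : ∀ j, (((x j : ℤ) + z j).toNat : ℤ) - x j = z j := fun j => by
    rw [Int.toNat_of_nonneg (hxz j)]; ring
  exact ⟨fun j => ((x j : ℤ) + z j).toNat, by simpa only [Adj, hy] using hz, hy⟩

lemma nonneg_sub_moveVec {x : Fin J → ℕ} {j1 j2 j3 j4 : Fin J} (h1 : x j1 ≠ 0) (h4 : x j4 ≠ 0)
    (h14 : j1 ≠ j4) (j : Fin J) : 0 ≤ (x j : ℤ) - moveVec j1 j2 j3 j4 j := by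
  simp only [moveVec, Pi.add_apply, Pi.sub_apply, Pi.single_apply]
  split_ifs <;> subst_vars <;> omega

lemma exists_adj_potential_lt {x : Fin J → ℕ} (hx : ¬IsConcentrated x) :
    ∃ y, Adj x y ∧ potential y < potential x := by
  simp only [IsConcentrated, not_forall, not_le] at hx
  obtain ⟨a, d, ha, hd, had⟩ := hx
  let a' : Fin J := ⟨a + 1, by omega⟩
  let d' : Fin J := ⟨d - 1, by omega⟩
  have hmem : -moveVec a a' d' d ∈ moves J :=
    ⟨a, a', d', d, Fin.lt_def.2 (by simp [a']), Fin.le_def.2 (by simp [a', d']; omega),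
      Fin.lt_def.2 (by simp [d']; omega), by simp [a', d']; omega, Or.inr rfl⟩
  obtain ⟨y, hxy, hy⟩ := exists_adj_of_nonneg hmem fun j => by
    simpa [sub_eq_add_neg] using nonneg_sub_moveVec ha hd (Fin.ne_of_lt (by omega)) j
  refine ⟨y, hxy, ?_⟩
  have hdrop : (potential y : ℤ) - potential x = _ := cast_sum_mul_sub _ x y
  simp only [hy, Pi.neg_apply, mul_neg, sum_neg_distrib, sum_mul_moveVec, a', d'] at hdrop
  push_cast [Nat.cast_sub (show 1 ≤ (d : ℕ) by omega)] at hdrop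
  have : (potential y : ℤ) < potential x := by linarith
  exact_mod_cast this

lemma exists_reflTransGen_isConcentrated (x : Fin J → ℕ) :
    ∃ s, ReflTransGen Adj x s ∧ IsConcentrated s := by
  induction x using (measure potential).wf.induction with
  | h x ih =>
    by_cases hx : IsConcentrated x
    · exact ⟨x, .refl, hx⟩
    obtain ⟨y, hxy, hlt⟩ := exists_adj_potential_lt hx
    obtain ⟨s, hys, hs⟩ := ih y hlt
    exact ⟨s, .head hxy hys, hs⟩

def canonicalTable (st : ℕ × ℕ) : Fin J → ℕ := fun j =>
  if (j : ℕ) + 1 = st.2 / st.1 then st.1 - st.2 % st.1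
  else if (j : ℕ) = st.2 / st.1 then st.2 % st.1 else 0

section Concentrated

variable {s : Fin J → ℕ} {k : Fin J}

lemma exists_min_ne_zero (h0 : s ≠ 0) : ∃ k, s k ≠ 0 ∧ ∀ j, s j ≠ 0 → (k : ℕ) ≤ j := by
  obtain ⟨j₀, hj₀⟩ := Function.ne_iff.1 h0
  obtain ⟨k, hk, hmin⟩ := (univ.filter (s · ≠ 0)).exists_min_image (fun j => (j : ℕ))
    ⟨j₀, by simpa using hj₀⟩
  exact ⟨k, (mem_filter.1 hk).2, fun j hj => hmin j (by simpa using hj)⟩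

lemma IsConcentrated.val_eq_or_eq (hs : IsConcentrated s) (hk : s k ≠ 0)
    (hmin : ∀ j, s j ≠ 0 → (k : ℕ) ≤ j) {j : Fin J} (hj : s j ≠ 0) :
    (j : ℕ) = k ∨ (j : ℕ) = k + 1 := by
  have := hmin j hj
  have := hs k j hk hj
  omega

lemma IsConcentrated.weighted_sum_add (hs : IsConcentrated s) (hk : s k ≠ 0)
    (hmin : ∀ j, s j ≠ 0 → (k : ℕ) ≤ j) :
    ∑ j : Fin J, ((j : ℕ) + 1) * s j + s k = ((k : ℕ) + 2) * ∑ j : Fin J, s j := by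
  have hsk : s k = ∑ j : Fin J, if j = k then s j else 0 := by simp
  rw [hsk, mul_sum, ← sum_add_distrib]
  refine sum_congr rfl fun j _ => ?_
  by_cases hj : s j = 0
  · simp [hj]
  rcases hs.val_eq_or_eq hk hmin hj with h | h
  · rw [if_pos (Fin.ext h), h]; ring
  · rw [if_neg (fun e => by simp [e] at h), h]; ring

lemma IsConcentrated.eq_canonicalTable (hs : IsConcentrated s) : s = canonicalTable (stat s) := by
  by_cases h0 : s = 0
  · subst h0
    ext j
    simp [canonicalTable, stat]
  obtain ⟨k, hk, hmin⟩ := exists_min_ne_zero h0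
  set N := ∑ j : Fin J, s j
  have hkN : s k ≤ N := single_le_sum (fun _ _ => Nat.zero_le _) (mem_univ k)
  have hweight := hs.weighted_sum_add hk hmin
  obtain ⟨hdiv, hmod⟩ : (stat s).2 / N = k + 1 ∧ (stat s).2 % N = N - s k :=
    (Nat.div_mod_unique (by omega)).2 ⟨by simp only [stat]; grind, by omega⟩
  ext j
  have hN : (stat s).1 = N := rfl
  simp only [canonicalTable, hN, hdiv, hmod, add_left_inj]
  by_cases hjk : (j : ℕ) = k
  · rw [if_pos hjk, Fin.ext hjk]
    omega
  by_cases hjk' : (j : ℕ) = k + 1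
  · have hsplit : N = s j + s k := by
      refine sum_eq_add j k (fun h => hjk (congrArg Fin.val h)) (fun i _ hi => ?_) (by simp) (by simp)
      by_contra hsi
      rcases hs.val_eq_or_eq hk hmin hsi with h | h
      exacts [hi.2 (Fin.ext h), hi.1 (Fin.ext (h.trans hjk'.symm))]
    rw [if_neg hjk, if_pos hjk']
    omega
  · rw [if_neg hjk, if_neg hjk']
    by_contra hsj
    exact (hs.val_eq_or_eq hk hmin hsj).elim hjk hjk'

end Concentrated

end UnivariatePoisson

open UnivariatePoisson in
theorem markov_basis_univariate_poisson_general (J : ℕ)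
    (B : Set (Fin J → ℤ))
    (hB : B = {z : Fin J → ℤ | ∃ j1 j2 j3 j4 : Fin J,
        j1 < j2 ∧ j2 ≤ j3 ∧ j3 < j4 ∧
        (j2 : ℕ) - (j1 : ℕ) = (j4 : ℕ) - (j3 : ℕ) ∧
        (z = Pi.single j1 (1 : ℤ) + Pi.single j4 (1 : ℤ)
              - Pi.single j2 (1 : ℤ) - Pi.single j3 (1 : ℤ) ∨
         z = -(Pi.single j1 (1 : ℤ) + Pi.single j4 (1 : ℤ)
              - Pi.single j2 (1 : ℤ) - Pi.single j3 (1 : ℤ)))})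
    (x y : Fin J → ℕ)
    (hsum : ∑ j : Fin J, x j = ∑ j : Fin J, y j)
    (hwsum : ∑ j : Fin J, ((j : ℕ) + 1) * x j = ∑ j : Fin J, ((j : ℕ) + 1) * y j) :
    ∃ (n : ℕ) (f : Fin (n + 1) → Fin J → ℕ),
      f 0 = x ∧ f (Fin.last n) = y ∧
      ∀ i : Fin n, (fun j => (f i.succ j : ℤ) - (f i.castSucc j : ℤ)) ∈ B := by
  obtain rfl : B = moves J := hB
  obtain ⟨s, hxs, hs⟩ := exists_reflTransGen_isConcentrated x
  obtain ⟨t, hyt, ht⟩ := exists_reflTransGen_isConcentrated y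
  have hst : s = t := by
    rw [hs.eq_canonicalTable, ht.eq_canonicalTable, ← stat_eq_of_reflTransGen hxs,
      ← stat_eq_of_reflTransGen hyt]
    exact congrArg canonicalTable (Prod.ext hsum hwsum)
  exact (hxs.trans (hst ▸ symm hyt)).exists_fin_chain

/-- The set B = { ±(e_{j1} + e_{j4} − e_{j2} − e_{j3}) :
1 ≤ j1 < j2 ≤ j3 < j4 ≤ J, j2 − j1 = j4 − j3 } is a Markov basis for the
univariate Poisson regression configuration: it connects every fiber.
Indices j ∈ {1,…,J} are represented by `j : Fin J` with value `(j : ℕ) + 1`. -/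
theorem markov_basis_univariate_poisson (J : ℕ) (hJ : 1 ≤ J)
    (B : Set (Fin J → ℤ))
    (hB : B = {z : Fin J → ℤ | ∃ j1 j2 j3 j4 : Fin J,
        j1 < j2 ∧ j2 ≤ j3 ∧ j3 < j4 ∧
        (j2 : ℕ) - (j1 : ℕ) = (j4 : ℕ) - (j3 : ℕ) ∧
        (z = Pi.single j1 (1 : ℤ) + Pi.single j4 (1 : ℤ)
              - Pi.single j2 (1 : ℤ) - Pi.single j3 (1 : ℤ) ∨
         z = -(Pi.single j1 (1 : ℤ) + Pi.single j4 (1 : ℤ)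
              - Pi.single j2 (1 : ℤ) - Pi.single j3 (1 : ℤ)))})
    (x y : Fin J → ℕ)
    (hsum : ∑ j : Fin J, x j = ∑ j : Fin J, y j)
    (hwsum : ∑ j : Fin J, ((j : ℕ) + 1) * x j = ∑ j : Fin J, ((j : ℕ) + 1) * y j) :
    ∃ (n : ℕ) (f : Fin (n + 1) → Fin J → ℕ),
      f 0 = x ∧ f (Fin.last n) = y ∧
      ∀ i : Fin n, (fun j => (f i.succ j : ℤ) - (f i.castSucc j : ℤ)) ∈ B :=
  markov_basis_univariate_poisson_general J B hB x y hsum hwsum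
end

section
/- Let J ≥ 1 and let B = { ±(e_{j1} + e_{j4} − e_{j2} − e_{j3}) : 1 ≤ j1 < j2 ≤ j3 < j4 ≤ J, j2 − j1 = j4 − j3 }. Then B is the minimum-fiber Markov basis for the univariate Poisson regression configuration: B is a Markov basis, and B equals the union of all inclusion-minimal Markov bases (taken over symmetric sets of moves). -/
/-!
Any symmetric set of moves that connects the degree-two fibers `{e_a + e_b : a + b = s}` connects
every fiber. By induction on the degree: two tables of a fiber either share a level, which can be
removed, or the one with the higher top level `a` contains `e_c + e_a` with `c < b < a`, where `b`
is the top level of the other table; a single degree-two move replaces it by `e_b + e_(a+c-b)`,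
creating a shared level.

The moves of `B` are exactly the differences of distinct degree-two tables in a common fiber, so
`B` is a Markov basis. A path that starts in a degree-two fiber only uses such differences, hence
`M ∩ B` is again a Markov basis for any Markov basis `M`, and a minimal one lies in `B`.
Conversely, `v - u ∈ B` lies in the minimal Markov basis obtained by choosing one table in each
degree-two fiber, `v` in the fiber of `u`, and joining every other table of the fiber to it.
-/

/-- A move for the univariate Poisson regression configuration: a nonzero
integer vector with zero sum and zero weighted sum (levels j ∈ {1,…,J} are
represented by `j : Fin J` with value `(j : ℕ) + 1`). -/
def PoisIsMove (J : ℕ) (z : Fin J → ℤ) : Prop :=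
  z ≠ 0 ∧ (∑ j : Fin J, z j) = 0 ∧ (∑ j : Fin J, (((j : ℕ) : ℤ) + 1) * z j) = 0

/-- Two tables are in the same fiber: equal sufficient statistics. -/
def PoisSameFiber (J : ℕ) (x y : Fin J → ℕ) : Prop :=
  (∑ j : Fin J, x j = ∑ j : Fin J, y j) ∧
  (∑ j : Fin J, ((j : ℕ) + 1) * x j = ∑ j : Fin J, ((j : ℕ) + 1) * y j)

/-- `M` connects `x` to `y` through nonnegative tables. -/
def PoisConnects (J : ℕ) (M : Set (Fin J → ℤ)) (x y : Fin J → ℕ) : Prop :=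
  ∃ (n : ℕ) (f : Fin (n + 1) → Fin J → ℕ),
    f 0 = x ∧ f (Fin.last n) = y ∧
    ∀ i : Fin n, (fun j => (f i.succ j : ℤ) - (f i.castSucc j : ℤ)) ∈ M

/-- A Markov basis: a symmetric set of moves connecting every fiber. -/
def PoisIsMarkovBasis (J : ℕ) (M : Set (Fin J → ℤ)) : Prop :=
  (∀ z ∈ M, PoisIsMove J z) ∧ (∀ z ∈ M, -z ∈ M) ∧
  ∀ x y : Fin J → ℕ, PoisSameFiber J x y → PoisConnects J M x y

/-- A minimal Markov basis: no proper symmetric subset is a Markov basis. -/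
def PoisIsMinimalMarkovBasis (J : ℕ) (M : Set (Fin J → ℤ)) : Prop :=
  PoisIsMarkovBasis J M ∧
  ∀ M' : Set (Fin J → ℤ), M' ⊂ M → (∀ z ∈ M', -z ∈ M') →
    ¬ PoisIsMarkovBasis J M'

open Relation

namespace Pois

variable {J : ℕ}

def diff (x y : Fin J → ℕ) : Fin J → ℤ := fun j => (y j : ℤ) - x j

def Step (M : Set (Fin J → ℤ)) (x y : Fin J → ℕ) : Prop := diff x y ∈ M

theorem neg_diff (x y : Fin J → ℕ) : -diff x y = diff y x := by
  funext j; simp [diff]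

theorem diff_add_right (x y t : Fin J → ℕ) : diff (x + t) (y + t) = diff x y := by
  funext j; simp [diff]

theorem connects_iff_reflTransGen {M : Set (Fin J → ℤ)} {x y : Fin J → ℕ} :
    PoisConnects J M x y ↔ ReflTransGen (Step M) x y := by
  constructor
  · rintro ⟨n, f, rfl, rfl, hf⟩
    induction n with
    | zero => exact .refl
    | succ n ih => exact .head (hf 0) (ih (f ∘ Fin.succ) fun i => hf i.succ)
  · intro h
    induction h using ReflTransGen.head_induction_on with
    | refl => exact ⟨0, fun _ => y, rfl, rfl, Fin.elim0⟩
    | head hxz _ ih =>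
      obtain ⟨n, f, hf0, hfn, hf⟩ := ih
      refine ⟨n + 1, Fin.cons _ f, rfl, by simpa using hfn, fun i => ?_⟩
      cases i using Fin.cases with
      | zero => subst hf0; exact hxz
      | succ i => simpa [← Fin.succ_castSucc] using hf i

theorem reflTransGen_step_symm {M : Set (Fin J → ℤ)} (hM : ∀ z ∈ M, -z ∈ M)
    {x y : Fin J → ℕ} (h : ReflTransGen (Step M) x y) : ReflTransGen (Step M) y x :=
  have : Std.Symm (Step M) := ⟨fun _ _ hab => by simpa only [Step, neg_diff] using hM _ hab⟩
  Std.Symm.symm _ _ h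

theorem reflTransGen_step_add_right {M : Set (Fin J → ℤ)} {x y : Fin J → ℕ}
    (h : ReflTransGen (Step M) x y) (t : Fin J → ℕ) :
    ReflTransGen (Step M) (x + t) (y + t) :=
  h.lift (· + t) fun a b hab => by simpa only [Step, diff_add_right] using hab

def deg (x : Fin J → ℕ) : ℕ := ∑ j, x j

def wsum (x : Fin J → ℕ) : ℕ := ∑ j : Fin J, ((j : ℕ) + 1) * x j

@[simp] theorem deg_add (x y : Fin J → ℕ) : deg (x + y) = deg x + deg y := by
  simp [deg, Finset.sum_add_distrib]

@[simp] theorem wsum_add (x y : Fin J → ℕ) : wsum (x + y) = wsum x + wsum y := by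
  simp [wsum, mul_add, Finset.sum_add_distrib]

@[simp] theorem deg_single (a : Fin J) : deg (Pi.single a 1) = 1 := by
  simp [deg]

@[simp] theorem wsum_single (a : Fin J) : wsum (Pi.single a 1) = a + 1 := by
  simp [wsum, Pi.single_apply]

theorem diff_eq_zero_iff {x y : Fin J → ℕ} : diff x y = 0 ↔ x = y := by
  simp only [funext_iff, diff, Pi.zero_apply, sub_eq_zero, Nat.cast_inj]
  exact ⟨fun h j => (h j).symm, fun h j => (h j).symm⟩

theorem isMove_diff_iff {x y : Fin J → ℕ} :
    PoisIsMove J (diff x y) ↔ x ≠ y ∧ deg x = deg y ∧ wsum x = wsum y := by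
  simp only [PoisIsMove, ne_eq, diff_eq_zero_iff, diff, mul_sub, Finset.sum_sub_distrib,
    sub_eq_zero]
  norm_cast
  simp only [deg, wsum, eq_comm]

theorem exists_eq_add_single {x : Fin J → ℕ} {a : Fin J} (ha : 0 < x a) :
    ∃ t : Fin J → ℕ, x = t + Pi.single a 1 :=
  ⟨x - Pi.single a 1, funext fun j => by
    rcases eq_or_ne j a with rfl | hj
    · simpa using (Nat.sub_add_cancel ha).symm
    · simp [hj]⟩

theorem exists_pos_of_deg_pos {x : Fin J → ℕ} (h : 0 < deg x) : ∃ a, 0 < x a := by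
  obtain ⟨a, -, ha⟩ := Finset.exists_ne_zero_of_sum_ne_zero h.ne'
  exact ⟨a, Nat.pos_of_ne_zero ha⟩

theorem eq_zero_of_deg_eq_zero {x : Fin J → ℕ} (h : deg x = 0) : x = 0 :=
  funext fun j => Finset.sum_eq_zero_iff.1 h j (Finset.mem_univ j)

theorem exists_eq_single_of_deg_eq_one {x : Fin J → ℕ} (h : deg x = 1) :
    ∃ a, x = Pi.single a 1 := by
  obtain ⟨a, ha⟩ := exists_pos_of_deg_pos (h ▸ one_pos)
  obtain ⟨t, rfl⟩ := exists_eq_add_single ha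
  rw [eq_zero_of_deg_eq_zero (x := t) (by simpa using h), zero_add]
  exact ⟨a, rfl⟩

theorem exists_le_of_deg_eq_two {x : Fin J → ℕ} (h : deg x = 2) :
    ∃ a b, a ≤ b ∧ x = Pi.single a 1 + Pi.single b 1 := by
  obtain ⟨a, ha⟩ := exists_pos_of_deg_pos (h ▸ two_pos)
  obtain ⟨t, rfl⟩ := exists_eq_add_single ha
  obtain ⟨b, rfl⟩ := exists_eq_single_of_deg_eq_one (by simpa using h)
  rcases le_total a b with hab | hba
  · exact ⟨a, b, hab, add_comm _ _⟩
  · exact ⟨b, a, hba, rfl⟩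

theorem disjoint_of_deg_eq_two {u w : Fin J → ℕ} (hu : deg u = 2) (hw : deg w = 2)
    (hs : wsum u = wsum w) (hne : u ≠ w) (j : Fin J) : u j = 0 ∨ w j = 0 := by
  by_contra! h
  obtain ⟨t, rfl⟩ := exists_eq_add_single (Nat.pos_of_ne_zero h.1)
  obtain ⟨s, rfl⟩ := exists_eq_add_single (Nat.pos_of_ne_zero h.2)
  obtain ⟨a, rfl⟩ := exists_eq_single_of_deg_eq_one (by simpa using hu)
  obtain ⟨b, rfl⟩ := exists_eq_single_of_deg_eq_one (by simpa using hw)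
  simp only [wsum_add, wsum_single, add_left_inj, Fin.val_inj] at hs
  exact hne (by rw [hs])

theorem eq_of_diff_eq_diff {u w p q : Fin J → ℕ} (huw : ∀ j, u j = 0 ∨ w j = 0)
    (hpq : ∀ j, p j = 0 ∨ q j = 0) (h : diff u w = diff p q) : u = p ∧ w = q := by
  simp only [funext_iff, diff] at h ⊢
  refine ⟨fun j => ?_, fun j => ?_⟩ <;>
    have := h j <;> have := huw j <;> have := hpq j <;> omega

theorem exists_support_max {x : Fin J → ℕ} (h : 0 < deg x) :
    ∃ b, 0 < x b ∧ ∀ j, 0 < x j → j ≤ b := by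
  obtain ⟨a, ha⟩ := exists_pos_of_deg_pos h
  obtain ⟨b, hb, hmax⟩ :=
    Finset.exists_max_image (Finset.univ.filter (0 < x ·)) id ⟨a, by simpa⟩
  exact ⟨b, by simpa using hb, fun j hj => hmax j (by simpa)⟩

theorem wsum_le_of_support_le {x : Fin J → ℕ} {m : ℕ}
    (h : ∀ j, 0 < x j → (j : ℕ) ≤ m) :
    wsum x ≤ (m + 1) * deg x := by
  rw [deg, Finset.mul_sum]
  refine Finset.sum_le_sum fun j _ => ?_
  rcases Nat.eq_zero_or_pos (x j) with h0 | h0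
  · simp [h0]
  · exact Nat.mul_le_mul_right _ (by simpa using h j h0)

theorem le_wsum_of_le_support {x : Fin J → ℕ} {m : ℕ}
    (h : ∀ j, 0 < x j → m ≤ (j : ℕ)) :
    (m + 1) * deg x ≤ wsum x := by
  rw [deg, Finset.mul_sum]
  refine Finset.sum_le_sum fun j _ => ?_
  rcases Nat.eq_zero_or_pos (x j) with h0 | h0
  · simp [h0]
  · exact Nat.mul_le_mul_right _ (by simpa using h j h0)

def ConnectsDegree (S : Set (Fin J → ℤ)) (n : ℕ) : Prop :=
  ∀ x y : Fin J → ℕ, deg x = n → deg y = n → wsum x = wsum y → ReflTransGen (Step S) x y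

section DegreeReduction

variable {S : Set (Fin J → ℤ)} {n : ℕ} {x y : Fin J → ℕ}

theorem reflTransGen_of_shared_level (ih : ConnectsDegree S n) (hd : deg x = n + 1)
    (hd' : deg y = n + 1) (hw : wsum x = wsum y) {v : Fin J} (hx : 0 < x v) (hy : 0 < y v) :
    ReflTransGen (Step S) x y := by
  obtain ⟨t, rfl⟩ := exists_eq_add_single hx
  obtain ⟨s, rfl⟩ := exists_eq_add_single hy
  simp only [deg_add, deg_single, wsum_add, wsum_single, add_left_inj] at hd hd' hw
  exact reflTransGen_step_add_right (ih t s hd hd' hw) _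

theorem reflTransGen_of_lt_support_max (h2 : ConnectsDegree S 2) (ih : ConnectsDegree S n)
    (hd : deg x = n + 1) (hd' : deg y = n + 1) (hw : wsum x = wsum y) {a b : Fin J}
    (hxa : 0 < x a) (hyb : 0 < y b) (hmax : ∀ j, 0 < y j → j ≤ b) (hba : b < a) :
    ReflTransGen (Step S) x y := by
  obtain ⟨c, hxc, hcb⟩ : ∃ c, 0 < x c ∧ c ≤ b := by
    by_contra! h
    have hx := le_wsum_of_le_support (m := b + 1) fun j hj => Fin.lt_def.1 (h j hj)
    have hy := wsum_le_of_support_le (m := b) fun j hj => Fin.le_def.1 (hmax j hj)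
    rw [hd] at hx
    rw [hd'] at hy
    nlinarith
  rcases hcb.eq_or_lt with rfl | hcb
  · exact reflTransGen_of_shared_level ih hd hd' hw hxc hyb
  obtain ⟨t, rfl⟩ := exists_eq_add_single hxa
  obtain ⟨t, rfl⟩ := exists_eq_add_single
    (show 0 < t c by simpa [Pi.single_apply, (hcb.trans hba).ne] using hxc)
  let d : Fin J := ⟨a + c - b, by omega⟩
  have hmove : ReflTransGen (Step S) (t + Pi.single c 1 + Pi.single a 1)
      (t + Pi.single b 1 + Pi.single d 1) := by
    rw [add_assoc, add_assoc, add_comm t, add_comm t]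
    exact reflTransGen_step_add_right (h2 _ _ (by simp) (by simp) (by simp [d]; omega)) t
  refine hmove.trans (reflTransGen_of_shared_level ih ?_ hd' ?_ (v := b) (by simp) hyb)
  · simpa using hd
  · simp only [wsum_add, wsum_single] at hw ⊢
    simp only [d]
    omega

theorem connectsDegree_of_connectsDegree_two (hS : ∀ z ∈ S, -z ∈ S) (h2 : ConnectsDegree S 2)
    (n : ℕ) : ConnectsDegree S n := by
  induction n with
  | zero =>
    intro x y hd hd' _
    rw [eq_zero_of_deg_eq_zero hd, eq_zero_of_deg_eq_zero hd']
  | succ n ih =>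
    intro x y hd hd' hw
    obtain ⟨a, hxa, hamax⟩ := exists_support_max (x := x) (by omega)
    obtain ⟨b, hyb, hbmax⟩ := exists_support_max (x := y) (by omega)
    rcases lt_trichotomy a b with hab | rfl | hba
    · exact reflTransGen_step_symm hS
        (reflTransGen_of_lt_support_max h2 ih hd' hd hw.symm hyb hxa hamax hab)
    · exact reflTransGen_of_shared_level ih hd hd' hw hxa hyb
    · exact reflTransGen_of_lt_support_max h2 ih hd hd' hw hxa hyb hbmax hba

theorem isMarkovBasis_of_connectsDegree_two (hmove : ∀ z ∈ S, PoisIsMove J z)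
    (hS : ∀ z ∈ S, -z ∈ S) (h2 : ConnectsDegree S 2) : PoisIsMarkovBasis J S :=
  ⟨hmove, hS, fun x y h => connects_iff_reflTransGen.2 <|
    connectsDegree_of_connectsDegree_two hS h2 _ x y rfl h.1.symm h.2⟩

end DegreeReduction

def degTwoMoves (J : ℕ) : Set (Fin J → ℤ) :=
  {z | ∃ u w : Fin J → ℕ,
    deg u = 2 ∧ deg w = 2 ∧ wsum u = wsum w ∧ u ≠ w ∧ z = diff u w}

theorem diff_mem_degTwoMoves {u w : Fin J → ℕ} (hu : deg u = 2) (hw : deg w = 2)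
    (hs : wsum u = wsum w) (hne : u ≠ w) : diff u w ∈ degTwoMoves J :=
  ⟨u, w, hu, hw, hs, hne, rfl⟩

theorem neg_mem_degTwoMoves {z : Fin J → ℤ} (hz : z ∈ degTwoMoves J) :
    -z ∈ degTwoMoves J := by
  obtain ⟨u, w, hu, hw, hs, hne, rfl⟩ := hz
  rw [neg_diff]
  exact diff_mem_degTwoMoves hw hu hs.symm hne.symm

theorem isMove_of_mem_degTwoMoves {z : Fin J → ℤ} (hz : z ∈ degTwoMoves J) :
    PoisIsMove J z := by
  obtain ⟨u, w, hu, hw, hs, hne, rfl⟩ := hz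
  exact isMove_diff_iff.2 ⟨hne, hu.trans hw.symm, hs⟩

theorem isMarkovBasis_degTwoMoves : PoisIsMarkovBasis J (degTwoMoves J) := by
  refine isMarkovBasis_of_connectsDegree_two (fun _ => isMove_of_mem_degTwoMoves)
    (fun _ => neg_mem_degTwoMoves) fun u w hu hw hs => ?_
  rcases eq_or_ne u w with rfl | hne
  · exact .refl
  · exact .single (diff_mem_degTwoMoves hu hw hs hne)

theorem diff_single_add_single (a b c d : Fin J) :
    diff (Pi.single a 1 + Pi.single b 1) (Pi.single c 1 + Pi.single d 1) =
      Pi.single c (1 : ℤ) + Pi.single d 1 - Pi.single a 1 - Pi.single b 1 := by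
  funext j
  simp only [diff, Pi.add_apply, Pi.sub_apply, Pi.single_apply]
  split_ifs <;> simp

theorem setOf_eq_degTwoMoves :
    {z : Fin J → ℤ | ∃ j1 j2 j3 j4 : Fin J,
        j1 < j2 ∧ j2 ≤ j3 ∧ j3 < j4 ∧
        (j2 : ℕ) - (j1 : ℕ) = (j4 : ℕ) - (j3 : ℕ) ∧
        (z = Pi.single j1 (1 : ℤ) + Pi.single j4 (1 : ℤ)
              - Pi.single j2 (1 : ℤ) - Pi.single j3 (1 : ℤ) ∨
         z = -(Pi.single j1 (1 : ℤ) + Pi.single j4 (1 : ℤ)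
              - Pi.single j2 (1 : ℤ) - Pi.single j3 (1 : ℤ)))} = degTwoMoves J := by
  ext z
  constructor
  · rintro ⟨j1, j2, j3, j4, h12, h23, h34, hgap, hz⟩
    set u : Fin J → ℕ := Pi.single j2 1 + Pi.single j3 1
    set w : Fin J → ℕ := Pi.single j1 1 + Pi.single j4 1
    have hu : deg u = 2 := by simp [u]
    have hw : deg w = 2 := by simp [w]
    have hs : wsum u = wsum w := by simp only [u, w, wsum_add, wsum_single]; omega
    have hne : u ≠ w := fun h => by
      simpa [u, w, Pi.single_apply, h12.ne, (h12.trans_le h23).ne,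
        (h12.trans_le h23 |>.trans h34).ne] using congrFun h j1
    rcases hz with rfl | rfl
    · exact ⟨u, w, hu, hw, hs, hne, (diff_single_add_single ..).symm⟩
    · refine ⟨w, u, hw, hu, hs.symm, hne.symm, ?_⟩
      rw [diff_single_add_single]
      abel
  · rintro ⟨u, w, hu, hw, hs, hne, rfl⟩
    obtain ⟨a, b, hab, rfl⟩ := exists_le_of_deg_eq_two hu
    obtain ⟨c, d, hcd, rfl⟩ := exists_le_of_deg_eq_two hw
    simp only [wsum_add, wsum_single] at hs
    rw [diff_single_add_single]
    rcases lt_trichotomy a c with hac | rfl | hca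
    · exact ⟨a, c, d, b, hac, hcd, by omega, by omega, .inr (by abel)⟩
    · exact absurd (by rw [Fin.ext (by omega : (b : ℕ) = d)]) hne
    · exact ⟨c, a, b, d, hca, hab, by omega, by omega, .inl rfl⟩

theorem reflTransGen_inter_degTwoMoves {M : Set (Fin J → ℤ)} (hM : ∀ z ∈ M, PoisIsMove J z)
    {u v : Fin J → ℕ} (h : ReflTransGen (Step M) u v) (hu : deg u = 2) :
    ReflTransGen (Step (M ∩ degTwoMoves J)) u v := by
  induction h using ReflTransGen.head_induction_on with
  | refl => exact .refl
  | head hstep _ ih =>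
    obtain ⟨hne, hd, hs⟩ := isMove_diff_iff.1 (hM _ hstep)
    exact .head ⟨hstep, diff_mem_degTwoMoves hu (hd ▸ hu) hs hne⟩ (ih (hd ▸ hu))

theorem subset_degTwoMoves_of_isMinimal {M : Set (Fin J → ℤ)}
    (hM : PoisIsMinimalMarkovBasis J M) : M ⊆ degTwoMoves J := by
  obtain ⟨⟨hmove, hsymm, hconn⟩, hmin⟩ := hM
  have hsymm' : ∀ z ∈ M ∩ degTwoMoves J, -z ∈ M ∩ degTwoMoves J :=
    fun z hz => ⟨hsymm z hz.1, neg_mem_degTwoMoves hz.2⟩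
  have hbasis : PoisIsMarkovBasis J (M ∩ degTwoMoves J) :=
    isMarkovBasis_of_connectsDegree_two (fun z hz => hmove z hz.1) hsymm' fun u w hu hw hs =>
      reflTransGen_inter_degTwoMoves hmove
        (connects_iff_reflTransGen.1 (hconn u w ⟨hu.trans hw.symm, hs⟩)) hu
  by_contra h
  exact hmin _ ⟨Set.inter_subset_left, fun h' => h fun z hz => (h' hz).2⟩ hsymm' hbasis

def IsCenterChoice (c : ℕ → Fin J → ℕ) : Prop :=
  ∀ u : Fin J → ℕ, deg u = 2 → deg (c (wsum u)) = 2 ∧ wsum (c (wsum u)) = wsum u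

def starMoves (c : ℕ → Fin J → ℕ) : Set (Fin J → ℤ) :=
  {z | ∃ u, deg u = 2 ∧ u ≠ c (wsum u) ∧
    (z = diff u (c (wsum u)) ∨ z = diff (c (wsum u)) u)}

section Star

variable {c : ℕ → Fin J → ℕ}

theorem neg_mem_starMoves {z : Fin J → ℤ} (hz : z ∈ starMoves c) : -z ∈ starMoves c := by
  obtain ⟨u, hu, hne, rfl | rfl⟩ := hz
  · exact ⟨u, hu, hne, .inr (neg_diff _ _)⟩
  · exact ⟨u, hu, hne, .inl (neg_diff _ _)⟩

theorem starMoves_subset_degTwoMoves (hc : IsCenterChoice c) : starMoves c ⊆ degTwoMoves J := by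
  rintro z ⟨u, hu, hne, rfl | rfl⟩
  · exact diff_mem_degTwoMoves hu (hc u hu).1 (hc u hu).2.symm hne
  · exact diff_mem_degTwoMoves (hc u hu).1 hu (hc u hu).2 hne.symm

theorem reflTransGen_center (u : Fin J → ℕ) (hu : deg u = 2) :
    ReflTransGen (Step (starMoves c)) u (c (wsum u)) := by
  rcases eq_or_ne u (c (wsum u)) with h | hne
  · exact h ▸ .refl
  · exact .single ⟨u, hu, hne, .inl rfl⟩

theorem isMarkovBasis_starMoves (hc : IsCenterChoice c) : PoisIsMarkovBasis J (starMoves c) := by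
  refine isMarkovBasis_of_connectsDegree_two
    (fun _ hz => isMove_of_mem_degTwoMoves (starMoves_subset_degTwoMoves hc hz))
    (fun _ => neg_mem_starMoves) fun u w hu hw hs => ?_
  exact (reflTransGen_center u hu).trans
    (hs ▸ reflTransGen_step_symm (fun _ => neg_mem_starMoves) (reflTransGen_center w hw))

theorem eq_center_of_step_starMoves (hc : IsCenterChoice c) {u w : Fin J → ℕ} (hu : deg u = 2)
    (hne : u ≠ c (wsum u)) (h : Step (starMoves c) u w) : w = c (wsum u) := by
  obtain ⟨huw, hd, hs⟩ := isMove_diff_iff.1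
    (isMove_of_mem_degTwoMoves (starMoves_subset_degTwoMoves hc h))
  obtain ⟨p, hp, hpne, hup | hup⟩ := h
  · obtain ⟨rfl, rfl⟩ := eq_of_diff_eq_diff (disjoint_of_deg_eq_two hu (hd ▸ hu) hs huw)
      (disjoint_of_deg_eq_two hp (hc p hp).1 (hc p hp).2.symm hpne) hup
    rfl
  · obtain ⟨rfl, rfl⟩ := eq_of_diff_eq_diff (disjoint_of_deg_eq_two hu (hd ▸ hu) hs huw)
      (disjoint_of_deg_eq_two (hc p hp).1 hp (hc p hp).2 hpne.symm) hup
    exact (hne (by rw [hs])).elim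

/-- From a table other than the center of its fiber the star only leads to that center, so
removing the move between them disconnects the two. -/
theorem isMinimal_starMoves (hc : IsCenterChoice c) :
    PoisIsMinimalMarkovBasis J (starMoves c) := by
  refine ⟨isMarkovBasis_starMoves hc, fun M' hsub hsymm' hbasis => ?_⟩
  obtain ⟨z, ⟨u, hu, hne, hz⟩, hzM'⟩ := Set.exists_of_ssubset hsub
  have hout : diff u (c (wsum u)) ∉ M' := by
    rcases hz with rfl | rfl
    · exact hzM'
    · exact fun h => hzM' (by simpa only [neg_diff] using hsymm' _ h)
  obtain ⟨w, hstep, -⟩ := ((connects_iff_reflTransGen.1 (hbasis.2.2 u (c (wsum u))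
    ⟨hu.trans (hc u hu).1.symm, (hc u hu).2.symm⟩)).cases_head).resolve_left hne
  exact hout (eq_center_of_step_starMoves hc hu hne (hsub.1 hstep) ▸ hstep)

end Star

theorem exists_isCenterChoice_eq {w : Fin J → ℕ} (hw : deg w = 2) :
    ∃ c : ℕ → Fin J → ℕ, IsCenterChoice c ∧ c (wsum w) = w := by
  refine ⟨Function.update (fun s => Classical.epsilon fun u => deg u = 2 ∧ wsum u = s)
    (wsum w) w, fun u hu => ?_, Function.update_self ..⟩
  by_cases h : wsum u = wsum w
  · rw [h, Function.update_self]
    exact ⟨hw, rfl⟩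
  · rw [Function.update_of_ne h]
    exact Classical.epsilon_spec (p := fun v => deg v = 2 ∧ wsum v = wsum u) ⟨u, hu, rfl⟩

theorem exists_isMinimal_mem {z : Fin J → ℤ} (hz : z ∈ degTwoMoves J) :
    ∃ M, PoisIsMinimalMarkovBasis J M ∧ z ∈ M := by
  obtain ⟨u, w, hu, hw, hs, hne, rfl⟩ := hz
  obtain ⟨c, hc, hcw⟩ := exists_isCenterChoice_eq hw
  exact ⟨starMoves c, isMinimal_starMoves hc, u, hu, by rwa [hs, hcw], .inl (by rw [hs, hcw])⟩

end Pois

theorem minimum_fiber_markov_basis_univariate_poisson_general (J : ℕ)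
    (B : Set (Fin J → ℤ))
    (hB : B = {z : Fin J → ℤ | ∃ j1 j2 j3 j4 : Fin J,
        j1 < j2 ∧ j2 ≤ j3 ∧ j3 < j4 ∧
        (j2 : ℕ) - (j1 : ℕ) = (j4 : ℕ) - (j3 : ℕ) ∧
        (z = Pi.single j1 (1 : ℤ) + Pi.single j4 (1 : ℤ)
              - Pi.single j2 (1 : ℤ) - Pi.single j3 (1 : ℤ) ∨
         z = -(Pi.single j1 (1 : ℤ) + Pi.single j4 (1 : ℤ)
              - Pi.single j2 (1 : ℤ) - Pi.single j3 (1 : ℤ)))}) :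
    PoisIsMarkovBasis J B ∧
    B = ⋃₀ {M : Set (Fin J → ℤ) | PoisIsMinimalMarkovBasis J M} := by
  rw [hB, Pois.setOf_eq_degTwoMoves]
  exact ⟨Pois.isMarkovBasis_degTwoMoves,
    Set.Subset.antisymm (fun _ hz => Pois.exists_isMinimal_mem hz)
      (Set.sUnion_subset fun _ hM => Pois.subset_degTwoMoves_of_isMinimal hM)⟩

/-- B = { ±(e_{j1} + e_{j4} − e_{j2} − e_{j3}) :
1 ≤ j1 < j2 ≤ j3 < j4 ≤ J, j2 − j1 = j4 − j3 } is the minimum-fiber Markov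
basis for the univariate Poisson regression configuration: B is a Markov
basis and B equals the union of all inclusion-minimal Markov bases. -/
theorem minimum_fiber_markov_basis_univariate_poisson (J : ℕ) (hJ : 1 ≤ J)
    (B : Set (Fin J → ℤ))
    (hB : B = {z : Fin J → ℤ | ∃ j1 j2 j3 j4 : Fin J,
        j1 < j2 ∧ j2 ≤ j3 ∧ j3 < j4 ∧
        (j2 : ℕ) - (j1 : ℕ) = (j4 : ℕ) - (j3 : ℕ) ∧
        (z = Pi.single j1 (1 : ℤ) + Pi.single j4 (1 : ℤ)
              - Pi.single j2 (1 : ℤ) - Pi.single j3 (1 : ℤ) ∨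
         z = -(Pi.single j1 (1 : ℤ) + Pi.single j4 (1 : ℤ)
              - Pi.single j2 (1 : ℤ) - Pi.single j3 (1 : ℤ)))}) :
    PoisIsMarkovBasis J B ∧
    B = ⋃₀ {M : Set (Fin J → ℤ) | PoisIsMinimalMarkovBasis J M} :=
  minimum_fiber_markov_basis_univariate_poisson_general J B hB
end

section
/- Let J ≥ 1 and let B = { ±(e_{j1} + e_{j4} − e_{j2} − e_{j3}) : 1 ≤ j1 < j2 ≤ j3 < j4 ≤ J, j2 − j1 = j4 − j3 }. For any two distinct tables x, y ∈ ℕ^J with Σ_{j=1}^J x_j = Σ_{j=1}^J y_j and Σ_{j=1}^J j·x_j = Σ_{j=1}^J j·y_j, there exists z ∈ B such that either x + z ∈ ℕ^J and ‖(x + z) − y‖₁ < ‖x − y‖₁, or y + z ∈ ℕ^J and ‖x − (y + z)‖₁ < ‖x − y‖₁; that is, B is norm-reducing for the univariate Poisson regression configuration. -/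
/-!
If `x ≠ y` lie in one fiber, then `d = x - y` is nonzero with `∑ d j = ∑ j * d j = 0`, which
forces its signs to alternate: there are indices `a < b < c` where `d` has signs `+ - +` or `- + -`.
Reflecting `b` in the midpoint of `[a, c]` yields two middle indices with equal gaps to `a` and
`c`. Subtracting the resulting move from the table that is larger at `a` and `c` lowers `|d|` by
one at `a`, `b` and `c`, while the fourth coordinate raises it by at most one.
-/

open Finset

section SignPattern

variable {ι : Type*} [Fintype ι] [LinearOrder ι]

/-- With `t` the first index where `d` is positive, a sign change `+ → -` is missing only if
every term of `∑ (w j - w t) * d j = 0` is nonnegative, forcing `d` to be supported at `t`. -/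
theorem exists_lt_pos_neg_of_sum_eq_zero {d w : ι → ℤ} (hw : StrictMono w) (hd : d ≠ 0)
    (h0 : ∑ j, d j = 0) (h1 : ∑ j, w j * d j = 0) :
    ∃ i j, i < j ∧ 0 < d i ∧ d j < 0 := by
  classical
  have hpos : ∃ p, 0 < d p := by
    by_contra! h
    exact hd (funext fun j =>
      (sum_eq_zero_iff_of_nonpos fun i _ => h i).1 h0 j (mem_univ j))
  by_contra! hno
  set s := univ.filter fun j => 0 < d j
  have hs : s.Nonempty := let ⟨p, hp⟩ := hpos; ⟨p, by simp [s, hp]⟩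
  set t := s.min' hs
  have ht : 0 < d t := by simpa [s] using s.min'_mem hs
  have hterm : ∀ j, 0 ≤ (w j - w t) * d j := by
    intro j
    rcases lt_or_ge j t with hjt | htj
    · have hdj : d j ≤ 0 := by
        by_contra! h
        exact (s.min'_le j (by simp [s, h])).not_gt hjt
      exact mul_nonneg_of_nonpos_of_nonpos (by linarith [hw hjt]) hdj
    · refine mul_nonneg (by linarith [hw.monotone htj]) ?_
      obtain h | h := htj.lt_or_eq
      · exact hno t j h ht
      · exact h ▸ ht.le
  have hsum : ∑ j, (w j - w t) * d j = 0 := by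
    simp only [sub_mul, sum_sub_distrib, ← mul_sum, h1, h0, mul_zero, sub_zero]
  have hzero := (sum_eq_zero_iff_of_nonneg fun j _ => hterm j).1 hsum
  have hsupp : ∀ j ≠ t, d j = 0 := fun j hj =>
    (mul_eq_zero.1 (hzero j (mem_univ j))).resolve_left (sub_ne_zero.2 (hw.injective.ne hj))
  rw [sum_eq_single t (fun j _ hj => hsupp j hj) (by simp)] at h0
  exact ht.ne' h0

theorem exists_sign_alternation {d w : ι → ℤ} (hw : StrictMono w) (hd : d ≠ 0)
    (h0 : ∑ j, d j = 0) (h1 : ∑ j, w j * d j = 0) :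
    ∃ a b c, a < b ∧ b < c ∧
      ((0 < d a ∧ d b < 0 ∧ 0 < d c) ∨ (d a < 0 ∧ 0 < d b ∧ d c < 0)) := by
  obtain ⟨i, j, hij, hi, hj⟩ := exists_lt_pos_neg_of_sum_eq_zero hw hd h0 h1
  obtain ⟨k, l, hkl, hk, hl⟩ := exists_lt_pos_neg_of_sum_eq_zero hw (neg_ne_zero.2 hd)
    (by simp [h0]) (by simp [h1])
  simp only [Pi.neg_apply, neg_pos, neg_lt_zero] at hk hl
  rcases lt_or_gt_of_ne (show i ≠ k by rintro rfl; linarith) with hik | hki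
  · exact ⟨i, k, l, hik, hkl, Or.inl ⟨hi, hk, hl⟩⟩
  · exact ⟨k, i, j, hki, hij, Or.inr ⟨hk, hi, hj⟩⟩

end SignPattern

/-- The reflection `a + c - b` of `b` in the midpoint of `[a, c]` is the other middle index. -/
theorem Fin.exists_equal_gap {J : ℕ} {a b c : Fin J} (hab : a < b) (hbc : b < c) :
    ∃ j2 j3 : Fin J, a < j2 ∧ j2 ≤ j3 ∧ j3 < c ∧ (j2 : ℕ) - a = (c : ℕ) - j3 ∧
      (j2 = b ∨ j3 = b) := by
  have hb' : (a : ℕ) + c - b < J := by omega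
  refine ⟨min b ⟨a + c - b, hb'⟩, max b ⟨a + c - b, hb'⟩, ?_, min_le_max, ?_, ?_, ?_⟩
  · simp only [lt_min_iff, Fin.lt_def]; omega
  · simp only [max_lt_iff, Fin.lt_def]; omega
  · simp only [Fin.coe_min, Fin.coe_max]; omega
  · rcases le_total b ⟨a + c - b, hb'⟩ with h | h
    · exact Or.inl (min_eq_left h)
    · exact Or.inr (max_eq_left h)

section Move

variable {ι : Type*} [DecidableEq ι]

def poissonMove (j1 j2 j3 j4 : ι) : ι → ℤ :=
  Pi.single j1 1 + Pi.single j4 1 - Pi.single j2 1 - Pi.single j3 1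

theorem poissonMove_swap_middle (j1 j2 j3 j4 : ι) :
    poissonMove j1 j2 j3 j4 = poissonMove j1 j3 j2 j4 := by
  simp only [poissonMove]
  abel

theorem natCast_add_neg_poissonMove_nonneg (x : ι → ℕ) {j1 j4 : ι} (j2 j3 : ι)
    (h14 : j1 ≠ j4) (h1 : 0 < x j1) (h4 : 0 < x j4) (j : ι) :
    0 ≤ (x j : ℤ) + (-poissonMove j1 j2 j3 j4) j := by
  simp only [poissonMove, Pi.neg_apply, Pi.sub_apply, Pi.add_apply, Pi.single_apply]
  split_ifs <;> subst_vars <;> simp_all <;> omega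

variable [Fintype ι]

theorem sum_abs_add_single (v : ι → ℤ) (i : ι) (c : ℤ) :
    ∑ j, |(v + Pi.single i c : ι → ℤ) j| = ∑ j, |v j| + (|v i + c| - |v i|) := by
  rw [← sub_eq_iff_eq_add', ← sum_sub_distrib, sum_eq_single i (fun j _ hj => by simp [hj])
    (by simp)]
  simp

theorem sum_abs_add_single_le (v : ι → ℤ) (i : ι) (c : ℤ) :
    ∑ j, |(v + Pi.single i c : ι → ℤ) j| ≤ ∑ j, |v j| + |c| := by
  rw [sum_abs_add_single]
  linarith [abs_add_le (v i) c]

theorem sum_abs_add_single_neg_one {v : ι → ℤ} {i : ι} (hi : 0 < v i) :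
    ∑ j, |(v + Pi.single i (-1) : ι → ℤ) j| = ∑ j, |v j| - 1 := by
  rw [sum_abs_add_single, abs_of_pos hi, abs_of_nonneg (by omega)]
  ring

theorem sum_abs_add_single_one {v : ι → ℤ} {i : ι} (hi : v i < 0) :
    ∑ j, |(v + Pi.single i 1 : ι → ℤ) j| = ∑ j, |v j| - 1 := by
  rw [sum_abs_add_single, abs_of_neg hi, abs_of_nonpos (by omega)]
  ring

/-- Three coordinates of the move push `v` towards `0`; the fourth costs at most `1`. -/
theorem sum_abs_sub_poissonMove_lt (v : ι → ℤ) {a b c : ι} (b' : ι) (hab : a ≠ b)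
    (hac : a ≠ c) (hbc : b ≠ c) (ha : 0 < v a) (hb : v b < 0) (hc : 0 < v c) :
    ∑ j, |(v - poissonMove a b b' c) j| < ∑ j, |v j| := by
  have hmove : v - poissonMove a b b' c =
      v + Pi.single a (-1) + Pi.single c (-1) + Pi.single b 1 + Pi.single b' 1 := by
    ext j
    simp only [poissonMove, Pi.add_apply, Pi.sub_apply, Pi.single_apply]
    split_ifs <;> ring
  calc _ ≤ ∑ j, |(v + Pi.single a (-1) + Pi.single c (-1) + Pi.single b 1 : ι → ℤ) j|
          + |1| := hmove ▸ sum_abs_add_single_le _ _ _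
    _ = ∑ j, |v j| - 3 + 1 := by
        rw [sum_abs_add_single_one (by simpa [Pi.single_apply, hab.symm, hbc] using hb),
          sum_abs_add_single_neg_one (by simpa [Pi.single_apply, hac.symm] using hc),
          sum_abs_add_single_neg_one ha, abs_one]
        ring
    _ < ∑ j, |v j| := by linarith

theorem sum_abs_add_neg_poissonMove_sub_lt [LinearOrder ι] (x y : ι → ℕ) {j1 j2 j3 j4 : ι}
    (h12 : j1 < j2) (h23 : j2 ≤ j3) (h34 : j3 < j4) (h1 : y j1 < x j1) (h4 : y j4 < x j4)
    (hmid : x j2 < y j2 ∨ x j3 < y j3) :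
    ∑ j, |(x j : ℤ) + (-poissonMove j1 j2 j3 j4) j - y j| < ∑ j, |(x j : ℤ) - y j| := by
  set v : ι → ℤ := fun j => (x j : ℤ) - y j
  have hv : ∀ j, (x j : ℤ) + (-poissonMove j1 j2 j3 j4) j - y j =
      (v - poissonMove j1 j2 j3 j4) j := fun j => by simp only [v, Pi.sub_apply, Pi.neg_apply]; ring
  have h14 : j1 ≠ j4 := (h12.trans_le h23 |>.trans h34).ne
  simp only [hv]
  rcases hmid with h2 | h3
  · exact sum_abs_sub_poissonMove_lt v j3 h12.ne h14 (h23.trans_lt h34).ne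
      (by simp [v]; omega) (by simp [v]; omega) (by simp [v]; omega)
  · rw [poissonMove_swap_middle]
    exact sum_abs_sub_poissonMove_lt v j2 (h12.trans_le h23).ne h14 h34.ne
      (by simp [v]; omega) (by simp [v]; omega) (by simp [v]; omega)

end Move

theorem norm_reducing_univariate_poisson_general (J : ℕ)
    (B : Set (Fin J → ℤ))
    (hB : B = {z : Fin J → ℤ | ∃ j1 j2 j3 j4 : Fin J,
        j1 < j2 ∧ j2 ≤ j3 ∧ j3 < j4 ∧
        (j2 : ℕ) - (j1 : ℕ) = (j4 : ℕ) - (j3 : ℕ) ∧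
        (z = Pi.single j1 (1 : ℤ) + Pi.single j4 (1 : ℤ)
              - Pi.single j2 (1 : ℤ) - Pi.single j3 (1 : ℤ) ∨
         z = -(Pi.single j1 (1 : ℤ) + Pi.single j4 (1 : ℤ)
              - Pi.single j2 (1 : ℤ) - Pi.single j3 (1 : ℤ)))})
    (x y : Fin J → ℕ) (hxy : x ≠ y)
    (hsum : ∑ j : Fin J, x j = ∑ j : Fin J, y j)
    (hwsum : ∑ j : Fin J, ((j : ℕ) + 1) * x j = ∑ j : Fin J, ((j : ℕ) + 1) * y j) :
    ∃ z ∈ B,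
      ((∀ j, 0 ≤ (x j : ℤ) + z j) ∧
        ∑ j : Fin J, |((x j : ℤ) + z j) - (y j : ℤ)|
          < ∑ j : Fin J, |(x j : ℤ) - (y j : ℤ)|) ∨
      ((∀ j, 0 ≤ (y j : ℤ) + z j) ∧
        ∑ j : Fin J, |(x j : ℤ) - ((y j : ℤ) + z j)|
          < ∑ j : Fin J, |(x j : ℤ) - (y j : ℤ)|) := by
  let d : Fin J → ℤ := fun j => (x j : ℤ) - y j
  have hd : d ≠ 0 := fun h => hxy (funext fun j => by simpa [d, sub_eq_zero] using congrFun h j)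
  have h0 : ∑ j, d j = 0 := by
    simp only [d, sum_sub_distrib, sub_eq_zero]; exact_mod_cast hsum
  have h1 : ∑ j : Fin J, (((j : ℕ) : ℤ) + 1) * d j = 0 := by
    simp only [d, mul_sub, sum_sub_distrib, sub_eq_zero]; exact_mod_cast hwsum
  have hw : StrictMono fun j : Fin J => ((j : ℕ) : ℤ) + 1 := fun i j h => by dsimp only; omega
  obtain ⟨a, b, c, hab, hbc, hsign⟩ := exists_sign_alternation hw hd h0 h1
  obtain ⟨j2, j3, h12, h23, h34, hgap, hb⟩ := Fin.exists_equal_gap hab hbc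
  have hmid (u v : Fin J → ℕ) (h : u b < v b) : u j2 < v j2 ∨ u j3 < v j3 := by
    rcases hb with rfl | rfl <;> simp [h]
  refine ⟨-poissonMove a j2 j3 c,
    hB ▸ ⟨a, j2, j3, c, h12, h23, h34, hgap, Or.inr rfl⟩, ?_⟩
  have hac : a ≠ c := (hab.trans hbc).ne
  simp only [d] at hsign
  rcases hsign with ⟨ha, hb, hc⟩ | ⟨ha, hb, hc⟩
  · exact Or.inl ⟨natCast_add_neg_poissonMove_nonneg x j2 j3 hac (by omega) (by omega),
      sum_abs_add_neg_poissonMove_sub_lt x y h12 h23 h34 (by omega) (by omega)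
        (hmid x y (by omega))⟩
  · refine Or.inr ⟨natCast_add_neg_poissonMove_nonneg y j2 j3 hac (by omega) (by omega), ?_⟩
    simpa only [abs_sub_comm] using
      sum_abs_add_neg_poissonMove_sub_lt y x h12 h23 h34 (by omega) (by omega)
        (hmid y x (by omega))

/-- B = { ±(e_{j1} + e_{j4} − e_{j2} − e_{j3}) :
1 ≤ j1 < j2 ≤ j3 < j4 ≤ J, j2 − j1 = j4 − j3 } is norm-reducing for the
univariate Poisson regression configuration: for any two distinct tables
x, y in the same fiber there is z ∈ B which can be added to x or to y,
strictly reducing the L₁ distance between them. -/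
theorem norm_reducing_univariate_poisson (J : ℕ) (hJ : 1 ≤ J)
    (B : Set (Fin J → ℤ))
    (hB : B = {z : Fin J → ℤ | ∃ j1 j2 j3 j4 : Fin J,
        j1 < j2 ∧ j2 ≤ j3 ∧ j3 < j4 ∧
        (j2 : ℕ) - (j1 : ℕ) = (j4 : ℕ) - (j3 : ℕ) ∧
        (z = Pi.single j1 (1 : ℤ) + Pi.single j4 (1 : ℤ)
              - Pi.single j2 (1 : ℤ) - Pi.single j3 (1 : ℤ) ∨
         z = -(Pi.single j1 (1 : ℤ) + Pi.single j4 (1 : ℤ)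
              - Pi.single j2 (1 : ℤ) - Pi.single j3 (1 : ℤ)))})
    (x y : Fin J → ℕ) (hxy : x ≠ y)
    (hsum : ∑ j : Fin J, x j = ∑ j : Fin J, y j)
    (hwsum : ∑ j : Fin J, ((j : ℕ) + 1) * x j = ∑ j : Fin J, ((j : ℕ) + 1) * y j) :
    ∃ z ∈ B,
      ((∀ j, 0 ≤ (x j : ℤ) + z j) ∧
        ∑ j : Fin J, |((x j : ℤ) + z j) - (y j : ℤ)|
          < ∑ j : Fin J, |(x j : ℤ) - (y j : ℤ)|) ∨
      ((∀ j, 0 ≤ (y j : ℤ) + z j) ∧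
        ∑ j : Fin J, |(x j : ℤ) - ((y j : ℤ) + z j)|
          < ∑ j : Fin J, |(x j : ℤ) - (y j : ℤ)|) :=
  norm_reducing_univariate_poisson_general J B hB x y hxy hsum hwsum
end

section
/- Let x, y ∈ ℕ^J with x ≠ y, Σ_{j=1}^J x_j = Σ_{j=1}^J y_j and Σ_{j=1}^J j·x_j = Σ_{j=1}^J j·y_j. Let j1 = min{ k : x_k ≠ y_k } and suppose x_{j1} > y_{j1}. Then there exists j2 > j1 with x_{j2} < y_{j2}; moreover, letting j2 be the smallest such index, there exists j4 > j2 with x_{j4} > y_{j4}. -/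
/-!
The sum condition alone forces a negative entry of `x - y` after `j1`. For the second claim, if
`x - y` changed sign only once, at `j2`, then every term of `∑ (j2 - j) (x_j - y_j)` would be
nonnegative, while the sum vanishes by both fiber conditions; hence all terms vanish, which
contradicts `x_{j1} > y_{j1}`.
-/

open Finset

theorem eq_zero_of_sum_eq_zero_of_sum_mul_eq_zero_of_signChange {ι R : Type*} [Fintype ι]
    [LinearOrder ι] [CommRing R] [LinearOrder R] [IsStrictOrderedRing R] {w d : ι → R}
    (hw : StrictMono w) (m : ι) (hsum : ∑ i, d i = 0) (hmom : ∑ i, w i * d i = 0)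
    (hbefore : ∀ i < m, 0 ≤ d i) (hafter : ∀ i, m < i → d i ≤ 0) {i : ι} (hi : i ≠ m) :
    d i = 0 := by
  have hcentered : ∑ j, (w m - w j) * d j = 0 := by
    simp only [sub_mul, sum_sub_distrib, ← mul_sum, hsum, hmom, mul_zero, sub_zero]
  have hterm_nonneg : ∀ j ∈ univ, 0 ≤ (w m - w j) * d j := by
    intro j _
    rcases lt_trichotomy j m with hj | rfl | hj
    · exact mul_nonneg (sub_nonneg.2 (hw hj).le) (hbefore j hj)
    · simp
    · exact mul_nonneg_of_nonpos_of_nonpos (sub_nonpos.2 (hw hj).le) (hafter j hj)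
  have hterm := (sum_eq_zero_iff_of_nonneg hterm_nonneg).1 hcentered i (mem_univ i)
  exact (mul_eq_zero.1 hterm).resolve_left (sub_ne_zero.2 (hw.injective.ne hi.symm))

theorem exists_sign_change_indices_general (J : ℕ)
    (x y : Fin J → ℕ)
    (hsum : ∑ j : Fin J, x j = ∑ j : Fin J, y j)
    (hwsum : ∑ j : Fin J, ((j : ℕ) + 1) * x j = ∑ j : Fin J, ((j : ℕ) + 1) * y j)
    (j1 : Fin J) (hmin : ∀ k : Fin J, k < j1 → x k = y k)
    (hgt : x j1 > y j1) :
    (∃ j2 : Fin J, j1 < j2 ∧ x j2 < y j2) ∧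
    ∀ j2 : Fin J, j1 < j2 → x j2 < y j2 →
      (∀ k : Fin J, j1 < k → k < j2 → ¬ x k < y k) →
      ∃ j4 : Fin J, j2 < j4 ∧ x j4 > y j4 := by
  have hupto : ∀ k ≤ j1, y k ≤ x k := fun k hk =>
    hk.lt_or_eq.elim (fun hk => (hmin k hk).ge) fun hk => hk ▸ hgt.le
  refine ⟨?_, fun j2 h12 _ hbetween => ?_⟩
  · by_contra! hnone
    have hle : ∀ k ∈ univ, y k ≤ x k := fun k _ =>
      (le_or_gt k j1).elim (hupto k) (hnone k)
    exact (sum_lt_sum hle ⟨j1, mem_univ _, hgt⟩).ne' hsum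
  · by_contra! hnone
    set d : Fin J → ℤ := fun j => (x j : ℤ) - y j
    have hd_sum : ∑ j, d j = 0 := by
      simp only [d, sum_sub_distrib, sub_eq_zero]
      exact_mod_cast hsum
    have hd_mom : ∑ j : Fin J, (((j : ℕ) : ℤ) + 1) * d j = 0 := by
      simp only [d, mul_sub, sum_sub_distrib, sub_eq_zero]
      exact_mod_cast hwsum
    have hw : StrictMono fun j : Fin J => ((j : ℕ) : ℤ) + 1 := fun _ _ h => by
      simpa using h
    have hbefore : ∀ k < j2, 0 ≤ d k := fun k hk => by
      have : y k ≤ x k := (le_or_gt k j1).elim (hupto k) fun h1k => not_lt.1 (hbetween k h1k hk)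
      simpa [d] using this
    have hafter : ∀ k, j2 < k → d k ≤ 0 := fun k hk => by simpa [d] using hnone k hk
    have hd1 := eq_zero_of_sum_eq_zero_of_sum_mul_eq_zero_of_signChange hw j2 hd_sum hd_mom
      hbefore hafter h12.ne
    simp only [d, sub_eq_zero, Nat.cast_inj] at hd1
    exact hgt.ne' hd1

/-- Let x ≠ y be tables in the same fiber of the univariate
Poisson regression configuration, let j1 be the smallest index where they
differ, and suppose x_{j1} > y_{j1}. Then there exists j2 > j1 with
x_{j2} < y_{j2}; moreover, for the smallest such j2 there exists j4 > j2
with x_{j4} > y_{j4}. -/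
theorem exists_sign_change_indices (J : ℕ) (hJ : 1 ≤ J)
    (x y : Fin J → ℕ) (hxy : x ≠ y)
    (hsum : ∑ j : Fin J, x j = ∑ j : Fin J, y j)
    (hwsum : ∑ j : Fin J, ((j : ℕ) + 1) * x j = ∑ j : Fin J, ((j : ℕ) + 1) * y j)
    (j1 : Fin J) (hne : x j1 ≠ y j1) (hmin : ∀ k : Fin J, k < j1 → x k = y k)
    (hgt : x j1 > y j1) :
    (∃ j2 : Fin J, j1 < j2 ∧ x j2 < y j2) ∧
    ∀ j2 : Fin J, j1 < j2 → x j2 < y j2 →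
      (∀ k : Fin J, j1 < k → k < j2 → ¬ x k < y k) →
      ∃ j4 : Fin J, j2 < j4 ∧ x j4 > y j4 :=
  exists_sign_change_indices_general J x y hsum hwsum j1 hmin hgt
end

section
/- Let z = (z_{ij}) ∈ ℤ^{2×J} be a nonzero array with Σ_{j=1}^J z_{1j} = 0, z_{1j} + z_{2j} = 0 for every j, and Σ_{j=1}^J j·z_{1j} = 0. Then there exist indices j1 < j2 and j3 < j4 in {1,…,J} satisfying: (a) z_{1j1} > 0, z_{1j2} < 0, z_{1j3} < 0, z_{1j4} > 0; (b) if z_{1j1} = 1 then j1 ≠ j4; (c) if z_{1j2} = −1 then j2 ≠ j3; (d) z_{1j} = 0 for all j with j1 < j < j2 and all j with j3 < j < j4. -/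
/-!
Let `S k = z₁₁ + ⋯ + z₁ₖ`. Then `S 0 = S J = 0`, and Abel summation turns `Σ j z₁ⱼ = 0` into
`Σ_{k<J} S k = 0`, so `S` takes both signs. `j₁, j₂` are the last rise into and the first fall
out of a plateau of `S` at its maximum, `j₃, j₄` the same at its minimum. If `z₁ⱼ₁ = 1` and
`j₁ = j₄`, then `max S - min S = 1`, which is impossible as `max S > 0 > min S`; likewise for (c).
-/

open Finset

section Steps

variable {α : Type*} (S : ℕ → α)

theorem exists_last_step_before {i m : ℕ} (him : i ≤ m) (h : S i ≠ S m) :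
    ∃ p, i ≤ p ∧ p < m ∧ S p ≠ S (p + 1) ∧ ∀ n, p < n → n ≤ m → S n = S m := by
  induction m with
  | zero => exact absurd (by rw [Nat.le_zero.1 him]) h
  | succ m ih =>
    have him' : i ≤ m := by
      rcases Nat.lt_or_eq_of_le him with him | rfl
      · omega
      · exact absurd rfl h
    by_cases hstep : S m = S (m + 1)
    · obtain ⟨p, hip, hpm, hp, hconst⟩ := ih him' (hstep ▸ h)
      refine ⟨p, hip, by omega, hp, fun n hpn hnm => ?_⟩
      rcases Nat.lt_or_eq_of_le hnm with hnm | rfl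
      · rw [hconst n hpn (by omega), hstep]
      · rfl
    · exact ⟨m, him', by omega, hstep, fun n hmn hnm => by rw [le_antisymm hnm hmn]⟩

theorem exists_first_step_after {m j : ℕ} (hmj : m ≤ j) (h : S m ≠ S j) :
    ∃ q, m ≤ q ∧ q < j ∧ S q ≠ S (q + 1) ∧ ∀ n, m ≤ n → n ≤ q → S n = S m := by
  obtain ⟨d, rfl⟩ := Nat.exists_eq_add_of_le hmj
  clear hmj
  induction d generalizing m with
  | zero => exact absurd rfl h
  | succ d ih =>
    by_cases hstep : S m = S (m + 1)
    · obtain ⟨q, hmq, hqj, hq, hconst⟩ :=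
        ih (m := m + 1) (by rwa [← hstep, Nat.add_right_comm, Nat.add_assoc])
      refine ⟨q, by omega, by omega, hq, fun n hmn hnq => ?_⟩
      rcases Nat.eq_or_lt_of_le hmn with rfl | hmn
      · rfl
      · rw [hconst n hmn hnq, hstep]
    · exact ⟨m, le_rfl, by omega, hstep, fun n hmn hnm => by rw [le_antisymm hnm hmn]⟩

variable [LinearOrder α]

theorem exists_plateau_of_max {J m : ℕ} (hmJ : m ≤ J) (hmax : ∀ k ≤ J, S k ≤ S m)
    (h0 : S 0 < S m) (hJ : S J < S m) :
    ∃ p q, p < m ∧ m ≤ q ∧ q < J ∧ S p < S (p + 1) ∧ S (q + 1) < S q ∧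
      ∀ n, p < n → n ≤ q → S n = S m := by
  obtain ⟨p, -, hpm, hp, hrise⟩ := exists_last_step_before S (Nat.zero_le m) h0.ne
  obtain ⟨q, hmq, hqJ, hq, hfall⟩ := exists_first_step_after S hmJ hJ.ne'
  have hSp : S (p + 1) = S m := hrise _ (by omega) (by omega)
  have hSq : S q = S m := hfall q hmq le_rfl
  refine ⟨p, q, hpm, hmq, hqJ, ?_, ?_, fun n hpn hnq => ?_⟩
  · exact (hSp ▸ hmax p (by omega)).lt_of_ne hp
  · exact (hSq ▸ hmax (q + 1) (by omega)).lt_of_ne hq.symm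
  · rcases le_total n m with hnm | hmn
    · exact hrise n hpn hnm
    · exact hfall n hmn hnq

theorem exists_plateau_of_min {J m : ℕ} (hmJ : m ≤ J) (hmin : ∀ k ≤ J, S m ≤ S k)
    (h0 : S m < S 0) (hJ : S m < S J) :
    ∃ p q, p < m ∧ m ≤ q ∧ q < J ∧ S (p + 1) < S p ∧ S q < S (q + 1) ∧
      ∀ n, p < n → n ≤ q → S n = S m :=
  exists_plateau_of_max (α := αᵒᵈ) S hmJ hmin h0 hJ

end Steps

theorem sum_range_sum_range_add_sum_range_succ_mul {R : Type*} [CommRing R] (b : ℕ → R)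
    (N : ℕ) :
    ∑ k ∈ range N, ∑ n ∈ range k, b n + ∑ n ∈ range N, ((n : R) + 1) * b n =
      N * ∑ n ∈ range N, b n := by
  induction N with
  | zero => simp
  | succ N ih =>
    simp only [sum_range_succ, Nat.cast_succ]
    linear_combination ih

theorem exists_partialSum_pos_and_neg (b : ℕ → ℤ) {J : ℕ} (hsum : ∑ n ∈ range J, b n = 0)
    (hw : ∑ n ∈ range J, ((n : ℤ) + 1) * b n = 0) (hne : ∃ n < J, b n ≠ 0) :
    (∃ k < J, 0 < ∑ n ∈ range k, b n) ∧ (∃ k < J, ∑ n ∈ range k, b n < 0) := by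
  have hS : ∑ k ∈ range J, ∑ n ∈ range k, b n = 0 := by
    simpa [hsum, hw] using sum_range_sum_range_add_sum_range_succ_mul b J
  have hSne : ∃ k ∈ range J, ∑ n ∈ range k, b n ≠ 0 := by
    obtain ⟨n, hnJ, hn⟩ := hne
    by_contra! hzero
    have hSn : ∑ i ∈ range (n + 1), b i = 0 := by
      rcases (Nat.succ_le_of_lt hnJ).lt_or_eq with hlt | rfl
      · exact hzero _ (mem_range.2 hlt)
      · exact hsum
    rw [sum_range_succ, hzero n (mem_range.2 hnJ), zero_add] at hSn
    exact hn hSn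
  obtain ⟨k, hk, hpos⟩ := exists_pos_of_sum_zero_of_exists_nonzero _ hS hSne
  obtain ⟨k', hk', hneg⟩ := exists_pos_of_sum_zero_of_exists_nonzero
    (fun k => -∑ n ∈ range k, b n) (by rw [sum_neg_distrib, hS, neg_zero])
    (by simpa only [ne_eq, neg_eq_zero] using hSne)
  exact ⟨⟨k, mem_range.1 hk, hpos⟩, ⟨k', mem_range.1 hk', neg_pos.1 hneg⟩⟩

theorem exists_sign_pattern_of_sum_eq_zero_of_weighted_sum_eq_zero (b : ℕ → ℤ) {J : ℕ}
    (hsum : ∑ n ∈ range J, b n = 0) (hw : ∑ n ∈ range J, ((n : ℤ) + 1) * b n = 0)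
    (hne : ∃ n < J, b n ≠ 0) :
    ∃ j1 j2 j3 j4, j1 < j2 ∧ j3 < j4 ∧ j2 < J ∧ j4 < J ∧
      0 < b j1 ∧ b j2 < 0 ∧ b j3 < 0 ∧ 0 < b j4 ∧
      (b j1 = 1 → j1 ≠ j4) ∧ (b j2 = -1 → j2 ≠ j3) ∧
      (∀ n, j1 < n → n < j2 → b n = 0) ∧ (∀ n, j3 < n → n < j4 → b n = 0) := by
  set S : ℕ → ℤ := fun k => ∑ n ∈ range k, b n
  have hb : ∀ n, b n = S (n + 1) - S n := fun n => by simp [S, sum_range_succ]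
  have hS0 : S 0 = 0 := sum_range_zero b
  have hSJ : S J = 0 := hsum
  obtain ⟨⟨kp, hkp, hSkp⟩, ⟨kn, hkn, hSkn⟩⟩ := exists_partialSum_pos_and_neg b hsum hw hne
  obtain ⟨M, hM, hmax⟩ := exists_max_image (range (J + 1)) S nonempty_range_add_one
  obtain ⟨m, hm, hmin⟩ := exists_min_image (range (J + 1)) S nonempty_range_add_one
  simp only [mem_range, Nat.lt_succ_iff] at hM hm hmax hmin
  have hSM : 0 < S M := hSkp.trans_le (hmax kp hkp.le)
  have hSm : S m < 0 := (hmin kn hkn.le).trans_lt hSkn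
  obtain ⟨j1, j2, h1M, hM2, h2J, h1, h2, hplat12⟩ :=
    exists_plateau_of_max S hM hmax (by omega) (by omega)
  obtain ⟨j3, j4, h3m, hm4, h4J, h3, h4, hplat34⟩ :=
    exists_plateau_of_min S hm hmin (by omega) (by omega)
  simp only [hb]
  refine ⟨j1, j2, j3, j4, by omega, by omega, h2J, h4J, by omega, by omega, by omega, by omega,
    ?_, ?_, ?_, ?_⟩
  · rintro hj1 rfl
    have := hplat12 (j1 + 1) (by omega) (by omega)
    have := hplat34 j1 (by omega) le_rfl
    omega
  · rintro hj2 rfl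
    have := hplat12 j2 (by omega) le_rfl
    have := hplat34 (j2 + 1) (by omega) (by omega)
    omega
  · intro n h1n hn2
    rw [hplat12 n h1n hn2.le, hplat12 (n + 1) (by omega) hn2, sub_self]
  · intro n h3n hn4
    rw [hplat34 n h3n hn4.le, hplat34 (n + 1) (by omega) hn4, sub_self]

theorem univariate_logistic_move_sign_pattern_general (J : ℕ)
    (z : Fin 2 → Fin J → ℤ) (hz : z ≠ 0)
    (hsum : ∑ j : Fin J, z 0 j = 0)
    (hcol : ∀ j : Fin J, z 0 j + z 1 j = 0)
    (hwsum : ∑ j : Fin J, (((j : ℕ) : ℤ) + 1) * z 0 j = 0) :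
    ∃ j1 j2 j3 j4 : Fin J, j1 < j2 ∧ j3 < j4 ∧
      z 0 j1 > 0 ∧ z 0 j2 < 0 ∧ z 0 j3 < 0 ∧ z 0 j4 > 0 ∧
      (z 0 j1 = 1 → j1 ≠ j4) ∧
      (z 0 j2 = -1 → j2 ≠ j3) ∧
      (∀ j : Fin J, j1 < j → j < j2 → z 0 j = 0) ∧
      (∀ j : Fin J, j3 < j → j < j4 → z 0 j = 0) := by
  set b : ℕ → ℤ := fun n => if h : n < J then z 0 ⟨n, h⟩ else 0
  have hb : ∀ j : Fin J, b j = z 0 j := fun j => dif_pos j.isLt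
  have hne : ∃ n < J, b n ≠ 0 := by
    by_contra! hzero
    have hz0 : ∀ j, z 0 j = 0 := fun j => hb j ▸ hzero j j.isLt
    refine hz (funext fun i => funext fun j => ?_)
    match i with
    | 0 => exact hz0 j
    | 1 => show z 1 j = 0; linarith [hcol j, hz0 j]
  obtain ⟨j1, j2, j3, j4, h12, h34, h2J, h4J, h1, h2, h3, h4, hb1, hc, hz12, hz34⟩ :=
    exists_sign_pattern_of_sum_eq_zero_of_weighted_sum_eq_zero b
      (by simpa only [← Fin.sum_univ_eq_sum_range, hb] using hsum)
      (by simpa only [← Fin.sum_univ_eq_sum_range (fun n => ((n : ℤ) + 1) * b n), hb] using hwsum)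
      hne
  refine ⟨⟨j1, h12.trans h2J⟩, ⟨j2, h2J⟩, ⟨j3, h34.trans h4J⟩, ⟨j4, h4J⟩, h12, h34, ?_⟩
  simp only [← hb, Fin.forall_iff, Fin.mk_lt_mk, ne_eq, Fin.mk.injEq]
  exact ⟨h1, h2, h3, h4, hb1, hc, fun n _ => hz12 n, fun n _ => hz34 n⟩

/-- For any move z of the univariate logistic regression model
(nonzero z ∈ ℤ^{2×J} with Σ_j z_{1j} = 0, z_{1j} + z_{2j} = 0 for all j and
Σ_j j·z_{1j} = 0) there exist indices j1 < j2 and j3 < j4 with: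
(a) z_{1j1} > 0, z_{1j2} < 0, z_{1j3} < 0, z_{1j4} > 0;
(b) z_{1j1} = 1 implies j1 ≠ j4; (c) z_{1j2} = −1 implies j2 ≠ j3;
(d) z_{1j} = 0 for j1 < j < j2 and for j3 < j < j4.
Rows are indexed by `Fin 2` (row 1 is `0`), levels by `Fin J` with value
`(j : ℕ) + 1`. -/
theorem univariate_logistic_move_sign_pattern (J : ℕ) (hJ : 1 ≤ J)
    (z : Fin 2 → Fin J → ℤ) (hz : z ≠ 0)
    (hsum : ∑ j : Fin J, z 0 j = 0)
    (hcol : ∀ j : Fin J, z 0 j + z 1 j = 0)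
    (hwsum : ∑ j : Fin J, (((j : ℕ) : ℤ) + 1) * z 0 j = 0) :
    ∃ j1 j2 j3 j4 : Fin J, j1 < j2 ∧ j3 < j4 ∧
      z 0 j1 > 0 ∧ z 0 j2 < 0 ∧ z 0 j3 < 0 ∧ z 0 j4 > 0 ∧
      (z 0 j1 = 1 → j1 ≠ j4) ∧
      (z 0 j2 = -1 → j2 ≠ j3) ∧
      (∀ j : Fin J, j1 < j → j < j2 → z 0 j = 0) ∧
      (∀ j : Fin J, j3 < j → j < j4 → z 0 j = 0) :=
  univariate_logistic_move_sign_pattern_general J z hz hsum hcol hwsum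
end

section
/- Let x, y ∈ ℕ^{2×J} be two distinct tables in the same fiber of the univariate logistic regression model with x_{+j} = y_{+j} > 0 for all j. Then there exists z ∈ B_Λ such that either x + z ∈ ℕ^{2×J} and ‖(x + z) − y‖₁ < ‖x − y‖₁, or y + z ∈ ℕ^{2×J} and ‖x − (y + z)‖₁ < ‖x − y‖₁; that is, B_Λ is norm-reducing on all fibers with positive column sums. -/
/-- E_j ∈ ℤ^{2×J}: +1 at entry (1,j), −1 at entry (2,j), 0 elsewhere. -/
def LogisE (J : ℕ) (j : Fin J) : Fin 2 → Fin J → ℤ :=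
  fun i j' => if j' = j then (if i = 0 then 1 else -1) else 0

/-- B_Λ = { ±(E_{j1} + E_{j4} − E_{j2} − E_{j3}) :
1 ≤ j1 < j2 ≤ j3 < j4 ≤ J, j2 − j1 = j4 − j3 }. -/
def LogisBLambda (J : ℕ) : Set (Fin 2 → Fin J → ℤ) :=
  {z | ∃ j1 j2 j3 j4 : Fin J,
    j1 < j2 ∧ j2 ≤ j3 ∧ j3 < j4 ∧
    (j2 : ℕ) - (j1 : ℕ) = (j4 : ℕ) - (j3 : ℕ) ∧
    (z = LogisE J j1 + LogisE J j4 - LogisE J j2 - LogisE J j3 ∨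
     z = -(LogisE J j1 + LogisE J j4 - LogisE J j2 - LogisE J j3))}

/-!
Put `d = x₀ - y₀`. Equal column sums give `x₁ - y₁ = -d`, so `‖x - y‖₁ = 2 ‖d‖₁`, and the fiber
conditions say `∑ d_j = ∑ j d_j = 0`. Swapping `x` and `y` if necessary, the first nonzero entry
`d_a` is negative. The partial sums `S_k = ∑_{n<k} d_n` then start negative and, by the moment
condition, add up to zero, so some `S_k` is positive; at the last positive one, `S_u`, we have
`d_u < 0`. Let `q` be the first and `r` the last positive entry before `u` (if `q = r` then
`d_q ≥ 2`, as `S_u > 0` and `d_a < 0`). Mirroring `u` or `a` through `(q + r) / 2` gives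
`p < q ≤ r < s` with `p + s = q + r`, `d > 0` at `q, r` and `d ≤ 0` at `p, s`, one of them negative,
so the move `E_p + E_s - E_q - E_r` lowers `‖d‖₁`. It keeps `x` nonnegative unless `x₁` vanishes at
`p` or `s`; positivity of the column sums then forces `y₀ ≥ 1` there, and the opposite move can be
applied to `y`.
-/

open Finset

structure IsReducingQuadruple (D : ℕ → ℤ) (p q r s : ℕ) : Prop where
  lt_inner : p < q
  inner_le : q ≤ r
  inner_lt : r < s
  add_eq_add : p + s = q + r
  one_le_left : 1 ≤ D q
  one_le_right : 1 ≤ D r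
  two_le_of_eq : q = r → 2 ≤ D q
  outer_left_nonpos : D p ≤ 0
  outer_right_nonpos : D s ≤ 0
  outer_neg : D p < 0 ∨ D s < 0

section PartialSums

variable {D : ℕ → ℤ} {J : ℕ}

theorem sum_range_partial_sums (m : ℕ) :
    ∑ k ∈ range m, ∑ n ∈ range k, D n
      = ((m : ℤ) - 1) * ∑ n ∈ range m, D n - ∑ n ∈ range m, (n : ℤ) * D n := by
  induction m with
  | zero => simp
  | succ m ih =>
    rw [sum_range_succ, ih, sum_range_succ, sum_range_succ (fun n => (n : ℤ) * D n)]
    push_cast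
    ring

theorem exists_pos_partial_sum_of_neg (hs : ∑ n ∈ range J, D n = 0)
    (hm : ∑ n ∈ range J, (n : ℤ) * D n = 0) {k : ℕ} (hkJ : k < J)
    (hk : ∑ n ∈ range k, D n < 0) : ∃ K < J, 0 < ∑ n ∈ range K, D n := by
  have htotal : ∑ k ∈ range J, ∑ n ∈ range k, D n = 0 := by
    rw [sum_range_partial_sums, hs, hm]
    ring
  obtain ⟨K, hK, hpos⟩ :=
    exists_pos_of_sum_zero_of_exists_nonzero _ htotal ⟨k, mem_range.2 hkJ, hk.ne⟩
  exact ⟨K, mem_range.1 hK, hpos⟩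

theorem exists_neg_of_pos_partial_sum (hs : ∑ n ∈ range J, D n = 0) {K : ℕ} (hKJ : K ≤ J)
    (hK : 0 < ∑ n ∈ range K, D n) : ∃ u < J, 0 < ∑ n ∈ range u, D n ∧ D u < 0 := by
  classical
  set u := Nat.findGreatest (fun k => 0 < ∑ n ∈ range k, D n) J
  have hu : 0 < ∑ n ∈ range u, D n :=
    Nat.findGreatest_spec (P := fun k => 0 < ∑ n ∈ range k, D n) hKJ hK
  have huJ : u < J :=
    (Nat.findGreatest_le J).lt_of_ne fun h : u = J => by rw [h, hs] at hu; exact hu.false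
  have hnext : ¬ 0 < ∑ n ∈ range (u + 1), D n :=
    Nat.findGreatest_is_greatest (Nat.lt_succ_self u) huJ
  rw [sum_range_succ] at hnext
  exact ⟨u, huJ, hu, by linarith⟩

theorem two_le_of_pos_partial_sum {q a u : ℕ} (hqu : q < u) (hau : a < u) (haq : a ≠ q)
    (hDa : D a < 0) (hnonpos : ∀ n < u, n ≠ q → D n ≤ 0) (hS : 0 < ∑ n ∈ range u, D n) :
    2 ≤ D q := by
  have hsub : ({q, a} : Finset ℕ) ⊆ range u := by simp [insert_subset_iff, hqu, hau]
  have hle := sum_le_sum_of_subset_of_nonneg (f := fun n => -D n) hsub fun n hn hnqa => by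
    simp only [mem_insert, mem_singleton, not_or] at hnqa
    exact neg_nonneg.2 (hnonpos n (mem_range.1 hn) hnqa.1)
  rw [sum_pair haq.symm, sum_neg_distrib] at hle
  linarith

/-- The mirror image of `u` through `(q + r) / 2` lies below `q`, or else that of `a` lies strictly
between `r` and `u`. -/
theorem exists_isReducingQuadruple_of_sandwich {a q r u : ℕ} (haq : a < q) (hqr : q ≤ r)
    (hru : r < u) (hDa : D a < 0) (hDu : D u < 0) (hq : 1 ≤ D q) (hr : 1 ≤ D r)
    (hqr2 : q = r → 2 ≤ D q) (hbelow : ∀ n < q, D n ≤ 0)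
    (hbetween : ∀ n, r < n → n < u → D n ≤ 0) :
    ∃ p s, s ≤ u ∧ IsReducingQuadruple D p q r s := by
  rcases le_or_gt u (q + r) with h | h
  · exact ⟨q + r - u, u, le_rfl, by omega, hqr, hru, by omega, hq, hr, hqr2,
      hbelow _ (by omega), hDu.le, Or.inr hDu⟩
  · exact ⟨a, q + r - a, by omega, haq, hqr, by omega, by omega, hq, hr, hqr2, hDa.le,
      hbetween _ (by omega) (by omega), Or.inl hDa⟩

theorem exists_isReducingQuadruple_of_first_neg (hD0 : ∀ n, J ≤ n → D n = 0)
    (hs : ∑ n ∈ range J, D n = 0) (hm : ∑ n ∈ range J, (n : ℤ) * D n = 0) {a : ℕ}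
    (ha : D a < 0) (hbelow : ∀ m < a, D m = 0) :
    ∃ P Q R S : Fin J, IsReducingQuadruple D P Q R S := by
  classical
  have hSa : ∑ n ∈ range (a + 1), D n = D a := by
    rw [sum_range_succ, sum_eq_zero fun n hn => hbelow n (mem_range.1 hn), zero_add]
  have haJ : a + 1 < J := by
    have : a < J := not_le.1 fun h => ha.ne (hD0 a h)
    refine lt_of_le_of_ne this fun h => ?_
    rw [h, hs] at hSa
    exact ha.ne' hSa
  obtain ⟨K, hKJ, hK⟩ := exists_pos_partial_sum_of_neg hs hm haJ (hSa ▸ ha)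
  obtain ⟨u, huJ, hu, hDu⟩ := exists_neg_of_pos_partial_sum hs hKJ.le hK
  obtain ⟨n, hnu, hDn⟩ := exists_lt_of_sum_lt (f := fun _ => (0 : ℤ)) (by simpa using hu)
  have hpos : ∃ n, 0 < D n := ⟨n, hDn⟩
  set q := Nat.find hpos
  set r := Nat.findGreatest (fun n => 0 < D n) u
  have hnu : n < u := mem_range.1 hnu
  have hq : 0 < D q := Nat.find_spec hpos
  have hqu : q < u := (Nat.find_min' hpos hDn).trans_lt hnu
  have hr : 0 < D r := Nat.findGreatest_spec (P := fun n => 0 < D n) hqu.le hq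
  have hqr : q ≤ r := Nat.le_findGreatest hqu.le hq
  have hru : r < u := (Nat.findGreatest_le u).lt_of_ne fun h : r = u => by rw [h] at hr; linarith
  have hbelowq : ∀ m < q, D m ≤ 0 := fun m hm => not_lt.1 (Nat.find_min hpos hm)
  have hbetween : ∀ m, r < m → m < u → D m ≤ 0 := fun m hrm hmu =>
    not_lt.1 (Nat.findGreatest_is_greatest hrm hmu.le)
  have haq : a < q := by
    by_contra! h
    rcases h.lt_or_eq with h | h
    · linarith [hbelow q h]
    · rw [h] at hq
      linarith
  have hmult : q = r → 2 ≤ D q := fun hqr => two_le_of_pos_partial_sum hqu (haq.trans hqu)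
    haq.ne ha (fun m hmu hmq => (lt_or_gt_of_ne hmq).elim (hbelowq m)
      fun h => hbetween m (hqr ▸ h) hmu) hu
  obtain ⟨p, s, hsu, hquad⟩ :=
    exists_isReducingQuadruple_of_sandwich haq hqr hru ha hDu hq hr hmult hbelowq hbetween
  have := hquad.lt_inner
  exact ⟨⟨p, by omega⟩, ⟨q, by omega⟩, ⟨r, by omega⟩, ⟨s, by omega⟩, hquad⟩

theorem exists_isReducingQuadruple (hD0 : ∀ n, J ≤ n → D n = 0) (hne : ∃ n, D n ≠ 0)
    (hs : ∑ n ∈ range J, D n = 0) (hm : ∑ n ∈ range J, (n : ℤ) * D n = 0) :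
    ∃ P Q R S : Fin J, IsReducingQuadruple D P Q R S ∨ IsReducingQuadruple (-D) P Q R S := by
  classical
  have hbelow : ∀ m < Nat.find hne, D m = 0 := fun m hm => not_not.1 (Nat.find_min hne hm)
  rcases (Nat.find_spec hne).lt_or_gt with hneg | hpos
  · obtain ⟨P, Q, R, S, h⟩ := exists_isReducingQuadruple_of_first_neg hD0 hs hm hneg hbelow
    exact ⟨P, Q, R, S, Or.inl h⟩
  · obtain ⟨P, Q, R, S, h⟩ := exists_isReducingQuadruple_of_first_neg (D := -D)
      (by simpa using hD0) (by simp [hs]) (by simp [hm]) (by simpa using hpos)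
      (by simpa using hbelow)
    exact ⟨P, Q, R, S, Or.inr h⟩

theorem exists_isReducingQuadruple_extend {d : Fin J → ℤ} (hne : d ≠ 0) (hs : ∑ j, d j = 0)
    (hm : ∑ j : Fin J, (j : ℤ) * d j = 0) :
    ∃ P Q R S : Fin J, IsReducingQuadruple (Function.extend Fin.val d 0) P Q R S ∨
      IsReducingQuadruple (-Function.extend Fin.val d 0) P Q R S := by
  have hD : ∀ j : Fin J, Function.extend Fin.val d 0 j = d j := Fin.val_injective.extend_apply d 0
  refine exists_isReducingQuadruple
    (fun n hn => Function.extend_apply' _ _ _ fun ⟨j, hj⟩ => (hj ▸ j.isLt).not_ge hn) ?_ ?_ ?_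
  · obtain ⟨j, hj⟩ := Function.ne_iff.1 hne
    exact ⟨j, by rwa [hD]⟩
  · rw [← Fin.sum_univ_eq_sum_range]
    simpa only [hD] using hs
  · rw [← Fin.sum_univ_eq_sum_range (fun n => (n : ℤ) * Function.extend Fin.val d 0 n)]
    simpa only [hD] using hm

end PartialSums

section AbsSum

variable {ι : Type*}

theorem single_add_single_nonneg [DecidableEq ι] (a b j : ι) :
    0 ≤ (Pi.single a 1 + Pi.single b 1 : ι → ℤ) j := by
  simp only [Pi.add_apply, Pi.single_apply]
  positivity

theorem single_add_single_le [DecidableEq ι] {f : ι → ℤ} {a b : ι}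
    (hf : ∀ i, 0 ≤ f i) (ha : 1 ≤ f a) (hb : 1 ≤ f b) (hab : a = b → 2 ≤ f a) (j : ι) :
    (Pi.single a 1 + Pi.single b 1 : ι → ℤ) j ≤ f j := by
  have := hf j
  simp only [Pi.add_apply, Pi.single_apply]
  split_ifs with hja hjb <;> subst_vars
  · have := hab rfl
    omega
  all_goals omega

/-- Taking `w` off the positive part of `d` lowers `∑ |d|` by `∑ w`; adding `u ≥ 0` raises it
by at most `∑ u`, and by strictly less where `d - w < 0 < u`. -/
theorem sum_abs_add_sub_lt [Fintype ι] {d u w : ι → ℤ} (hu : ∀ i, 0 ≤ u i)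
    (hw : ∀ i, 0 ≤ w i) (hwd : ∀ i, w i ≤ max (d i) 0) (huw : ∑ i, u i = ∑ i, w i)
    (hstrict : ∃ i, d i - w i < 0 ∧ 0 < u i) :
    ∑ i, |d i + u i - w i| < ∑ i, |d i| := by
  have hsub : ∀ i, |d i - w i| = |d i| - w i := fun i => by
    rcases le_or_gt 0 (d i) with h | h
    · have : w i ≤ d i := (hwd i).trans_eq (max_eq_left h)
      rw [abs_of_nonneg h, abs_of_nonneg (by linarith)]
    · have : w i = 0 := le_antisymm ((hwd i).trans_eq (max_eq_right h.le)) (hw i)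
      rw [this, sub_zero, sub_zero]
  calc ∑ i, |d i + u i - w i| < ∑ i, (|d i - w i| + u i) := by
        refine sum_lt_sum (fun i _ => abs_le.2 ⟨?_, ?_⟩) ?_
        · linarith [neg_abs_le (d i - w i), hu i]
        · linarith [le_abs_self (d i - w i)]
        · obtain ⟨i, hneg, hpos⟩ := hstrict
          refine ⟨i, mem_univ i, ?_⟩
          rw [abs_of_neg hneg]
          exact abs_lt.2 ⟨by linarith, by linarith⟩
    _ = ∑ i, |d i| := by simp only [hsub, sum_add_distrib, sum_sub_distrib, huw, sub_add_cancel]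

end AbsSum

theorem logisE_zero (J : ℕ) (j : Fin J) : LogisE J j 0 = Pi.single j 1 := by
  ext j'
  simp [LogisE, Pi.single_apply]

theorem logisE_one (J : ℕ) (j : Fin J) : LogisE J j 1 = -LogisE J j 0 := by
  ext j'
  by_cases h : j' = j <;> simp [LogisE, h]

theorem sum_abs_add_sub_lt_of_row_zero {J : ℕ} {x y : Fin 2 → Fin J → ℕ}
    (hcol : ∀ j, x 0 j + x 1 j = y 0 j + y 1 j) {z : Fin 2 → Fin J → ℤ}
    (hz : ∀ j, z 1 j = -z 0 j)
    (hlt : ∑ j, |(x 0 j : ℤ) - y 0 j + z 0 j| < ∑ j, |(x 0 j : ℤ) - y 0 j|) :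
    ∑ i : Fin 2, ∑ j, |(x i j : ℤ) + z i j - y i j|
      < ∑ i : Fin 2, ∑ j, |(x i j : ℤ) - y i j| := by
  have h0 : ∀ j, |(x 0 j : ℤ) + z 0 j - y 0 j| = |(x 0 j : ℤ) - y 0 j + z 0 j| := fun j => by
    ring_nf
  have h1 : ∀ j, |(x 1 j : ℤ) + z 1 j - y 1 j| = |(x 0 j : ℤ) - y 0 j + z 0 j| := fun j => by
    rw [← abs_neg, hz]
    have := hcol j
    congr 1
    omega
  have h2 : ∀ j, |(x 1 j : ℤ) - y 1 j| = |(x 0 j : ℤ) - y 0 j| := fun j => by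
    rw [← abs_neg]
    have := hcol j
    congr 1
    omega
  simp only [Fin.sum_univ_two, h0, h1, h2]
  linarith

def HasNormReducingMove (J : ℕ) (x y : Fin 2 → Fin J → ℕ) : Prop :=
  ∃ z ∈ LogisBLambda J,
    ((∀ i j, 0 ≤ (x i j : ℤ) + z i j) ∧
      (∑ i : Fin 2, ∑ j : Fin J, |((x i j : ℤ) + z i j) - (y i j : ℤ)|)
        < ∑ i : Fin 2, ∑ j : Fin J, |(x i j : ℤ) - (y i j : ℤ)|) ∨
    ((∀ i j, 0 ≤ (y i j : ℤ) + z i j) ∧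
      (∑ i : Fin 2, ∑ j : Fin J, |(x i j : ℤ) - ((y i j : ℤ) + z i j)|)
        < ∑ i : Fin 2, ∑ j : Fin J, |(x i j : ℤ) - (y i j : ℤ)|)

theorem HasNormReducingMove.symm {J : ℕ} {x y : Fin 2 → Fin J → ℕ}
    (h : HasNormReducingMove J y x) : HasNormReducingMove J x y := by
  obtain ⟨z, hz, h | h⟩ := h
  · exact ⟨z, hz, Or.inr (by simpa only [abs_sub_comm] using h)⟩
  · exact ⟨z, hz, Or.inl (by simpa only [abs_sub_comm] using h)⟩

/-- At a column where `x₀ < y₀` both `x₁` and `y₀` are positive; where `x₀ = y₀`, one of them is. -/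
theorem one_le_row_one_or_one_le_row_zero {J : ℕ} {x y : Fin 2 → Fin J → ℕ}
    (hcol : ∀ j, x 0 j + x 1 j = y 0 j + y 1 j) (hpos : ∀ j, 0 < x 0 j + x 1 j) {P S : Fin J}
    (hP : x 0 P ≤ y 0 P) (hS : x 0 S ≤ y 0 S) (hPS : x 0 P < y 0 P ∨ x 0 S < y 0 S) :
    (1 ≤ x 1 P ∧ 1 ≤ x 1 S) ∨ (1 ≤ y 0 P ∧ 1 ≤ y 0 S) := by
  have := hcol P; have := hcol S; have := hpos P; have := hpos S
  omega

section Move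

variable {J : ℕ} {D : ℕ → ℤ} {d : Fin J → ℤ} {P Q R S : Fin J}

theorem single_add_single_le_max (hD : ∀ j : Fin J, D j = d j)
    (h : IsReducingQuadruple D P Q R S) (j : Fin J) :
    (Pi.single Q 1 + Pi.single R 1 : Fin J → ℤ) j ≤ max (d j) 0 :=
  single_add_single_le (fun _ => le_max_right _ _) (le_max_of_le_left (hD Q ▸ h.one_le_left))
    (le_max_of_le_left (hD R ▸ h.one_le_right))
    (fun hQR => le_max_of_le_left (hD Q ▸ h.two_le_of_eq (congrArg Fin.val hQR))) j

theorem sum_abs_add_sub_lt_of_isReducingQuadruple (hD : ∀ j : Fin J, D j = d j)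
    (h : IsReducingQuadruple D P Q R S) :
    ∑ j, |d j + (Pi.single P 1 + Pi.single S 1 : Fin J → ℤ) j
      - (Pi.single Q 1 + Pi.single R 1 : Fin J → ℤ) j| < ∑ j, |d j| := by
  have hP : P ≠ Q ∧ P ≠ R :=
    ⟨(show P < Q from h.lt_inner).ne, (show P < R from h.lt_inner.trans_le h.inner_le).ne⟩
  have hS : S ≠ Q ∧ S ≠ R :=
    ⟨(show Q < S from h.inner_le.trans_lt h.inner_lt).ne', (show R < S from h.inner_lt).ne'⟩
  refine sum_abs_add_sub_lt (single_add_single_nonneg P S) (single_add_single_nonneg Q R)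
    (single_add_single_le_max hD h) (by simp [sum_add_distrib]) ?_
  rcases h.outer_neg with hneg | hneg
  · refine ⟨P, ?_, ?_⟩
    · simpa [Pi.single_apply, hP, ← hD] using hneg
    · simp only [Pi.add_apply, Pi.single_eq_same, Pi.single_apply]
      positivity
  · refine ⟨S, ?_, ?_⟩
    · simpa [Pi.single_apply, hS, ← hD] using hneg
    · simp only [Pi.add_apply, Pi.single_eq_same, Pi.single_apply]
      positivity

end Move

theorem hasNormReducingMove_of_isReducingQuadruple {J : ℕ} {x y : Fin 2 → Fin J → ℕ}
    (hcol : ∀ j, x 0 j + x 1 j = y 0 j + y 1 j) (hpos : ∀ j, 0 < x 0 j + x 1 j) {D : ℕ → ℤ}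
    (hD : ∀ j : Fin J, D j = (x 0 j : ℤ) - y 0 j) {P Q R S : Fin J}
    (h : IsReducingQuadruple D P Q R S) : HasNormReducingMove J x y := by
  set u : Fin J → ℤ := Pi.single P 1 + Pi.single S 1
  set w : Fin J → ℤ := Pi.single Q 1 + Pi.single R 1
  set z := LogisE J P + LogisE J S - LogisE J Q - LogisE J R
  have hz0 : ∀ j, z 0 j = u j - w j := fun j => by
    simp only [z, u, w, Pi.add_apply, Pi.sub_apply, logisE_zero]
    ring
  have hz1 : ∀ j, z 1 j = -z 0 j := fun j => by
    simp only [z, Pi.add_apply, Pi.sub_apply, logisE_one, Pi.neg_apply]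
    ring
  have hgap : (Q : ℕ) - P = S - R := by
    have := h.add_eq_add
    omega
  have hlt := sum_abs_add_sub_lt_of_row_zero hcol hz1 (by
    simpa only [hz0, add_sub_assoc] using sum_abs_add_sub_lt_of_isReducingQuadruple hD h)
  have hwx : ∀ j, w j ≤ x 0 j := fun j => (single_add_single_le_max hD h j).trans
    (max_le (sub_le_self _ (by positivity)) (by positivity))
  have hwy : ∀ j, w j ≤ y 1 j := fun j => (single_add_single_le_max hD h j).trans
    (max_le (by have := hcol j; omega) (by positivity))
  have hPS : P ≠ S := (show P < S from (h.lt_inner.trans_le h.inner_le).trans h.inner_lt).ne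
  have hule : ∀ f : Fin J → ℕ, 1 ≤ f P → 1 ≤ f S → ∀ j, u j ≤ f j := fun f hP hS =>
    single_add_single_le (fun _ => by positivity) (by exact_mod_cast hP) (by exact_mod_cast hS)
      fun h => absurd h hPS
  have hdP := hD P ▸ h.outer_left_nonpos
  have hdS := hD S ▸ h.outer_right_nonpos
  have hdPS := hD P ▸ hD S ▸ h.outer_neg
  rcases one_le_row_one_or_one_le_row_zero hcol hpos (P := P) (S := S) (by omega) (by omega)
    (by omega) with ⟨hxP, hxS⟩ | ⟨hyP, hyS⟩
  · refine ⟨z, ⟨P, Q, R, S, h.lt_inner, h.inner_le, h.inner_lt, hgap, Or.inl rfl⟩,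
      Or.inl ⟨Fin.forall_fin_two.2 ⟨fun j => ?_, fun j => ?_⟩, hlt⟩⟩
    · linarith [hz0 j, single_add_single_nonneg P S j, hwx j]
    · linarith [hz1 j, hz0 j, single_add_single_nonneg Q R j, hule (x 1) hxP hxS j]
  · refine ⟨-z, ⟨P, Q, R, S, h.lt_inner, h.inner_le, h.inner_lt, hgap, Or.inr rfl⟩,
      Or.inr ⟨Fin.forall_fin_two.2 ⟨fun j => ?_, fun j => ?_⟩, ?_⟩⟩
    · rw [Pi.neg_apply, Pi.neg_apply, hz0]
      linarith [single_add_single_nonneg Q R j, hule (y 0) hyP hyS j]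
    · rw [Pi.neg_apply, Pi.neg_apply, hz1, hz0]
      linarith [single_add_single_nonneg P S j, hwy j]
    · simpa only [Pi.neg_apply, ← sub_eq_add_neg, sub_sub_eq_add_sub] using hlt

theorem norm_reducing_univariate_logistic_general (J : ℕ)
    (x y : Fin 2 → Fin J → ℕ) (hxy : x ≠ y)
    (hsum : ∑ j : Fin J, x 0 j = ∑ j : Fin J, y 0 j)
    (hcol : ∀ j : Fin J, x 0 j + x 1 j = y 0 j + y 1 j)
    (hpos : ∀ j : Fin J, 0 < x 0 j + x 1 j)
    (hwsum : ∑ j : Fin J, ((j : ℕ) + 1) * x 0 j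
           = ∑ j : Fin J, ((j : ℕ) + 1) * y 0 j) :
    ∃ z ∈ LogisBLambda J,
      ((∀ i j, 0 ≤ (x i j : ℤ) + z i j) ∧
        (∑ i : Fin 2, ∑ j : Fin J, |((x i j : ℤ) + z i j) - (y i j : ℤ)|)
          < ∑ i : Fin 2, ∑ j : Fin J, |(x i j : ℤ) - (y i j : ℤ)|) ∨
      ((∀ i j, 0 ≤ (y i j : ℤ) + z i j) ∧
        (∑ i : Fin 2, ∑ j : Fin J, |(x i j : ℤ) - ((y i j : ℤ) + z i j)|)
          < ∑ i : Fin 2, ∑ j : Fin J, |(x i j : ℤ) - (y i j : ℤ)|) := by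
  set d : Fin J → ℤ := fun j => (x 0 j : ℤ) - y 0 j
  have hsumZ : ∑ j, (x 0 j : ℤ) = ∑ j, (y 0 j : ℤ) := by exact_mod_cast hsum
  have hs : ∑ j, d j = 0 := by simp only [d, sum_sub_distrib, hsumZ, sub_self]
  have hm : ∑ j : Fin J, (j : ℤ) * d j = 0 := by
    have hwsumZ := congrArg (Nat.cast : ℕ → ℤ) hwsum
    push_cast [add_mul, one_mul, sum_add_distrib] at hwsumZ
    simp only [d, mul_sub, sum_sub_distrib]
    linarith
  have hne : d ≠ 0 := by
    refine fun hd => hxy (funext fun i => funext fun j => ?_)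
    have h0 : x 0 j = y 0 j := by exact_mod_cast sub_eq_zero.1 (congrFun hd j)
    have h1 : x 1 j = y 1 j := by
      have := hcol j
      omega
    revert i
    exact Fin.forall_fin_two.2 ⟨h0, h1⟩
  have hD := Fin.val_injective.extend_apply d 0
  obtain ⟨P, Q, R, S, h | h⟩ := exists_isReducingQuadruple_extend hne hs hm
  · exact hasNormReducingMove_of_isReducingQuadruple hcol hpos hD h
  · refine (hasNormReducingMove_of_isReducingQuadruple (fun j => (hcol j).symm)
      (fun j => hcol j ▸ hpos j) (fun j => ?_) h).symm
    simp [hD, d]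

/-- B_Λ is norm-reducing on all fibers of the univariate
logistic regression model with positive column sums: for distinct tables
x, y in the same fiber with x_{+j} = y_{+j} > 0 for all j, some z ∈ B_Λ can
be added to x or to y, strictly reducing the L₁ distance. -/
theorem norm_reducing_univariate_logistic (J : ℕ) (hJ : 1 ≤ J)
    (x y : Fin 2 → Fin J → ℕ) (hxy : x ≠ y)
    (hsum : ∑ j : Fin J, x 0 j = ∑ j : Fin J, y 0 j)
    (hcol : ∀ j : Fin J, x 0 j + x 1 j = y 0 j + y 1 j)
    (hpos : ∀ j : Fin J, 0 < x 0 j + x 1 j)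
    (hwsum : ∑ j : Fin J, ((j : ℕ) + 1) * x 0 j
           = ∑ j : Fin J, ((j : ℕ) + 1) * y 0 j) :
    ∃ z ∈ LogisBLambda J,
      ((∀ i j, 0 ≤ (x i j : ℤ) + z i j) ∧
        (∑ i : Fin 2, ∑ j : Fin J, |((x i j : ℤ) + z i j) - (y i j : ℤ)|)
          < ∑ i : Fin 2, ∑ j : Fin J, |(x i j : ℤ) - (y i j : ℤ)|) ∨
      ((∀ i j, 0 ≤ (y i j : ℤ) + z i j) ∧
        (∑ i : Fin 2, ∑ j : Fin J, |(x i j : ℤ) - ((y i j : ℤ) + z i j)|)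
          < ∑ i : Fin 2, ∑ j : Fin J, |(x i j : ℤ) - (y i j : ℤ)|) :=
  norm_reducing_univariate_logistic_general J x y hxy hsum hcol hpos hwsum
end

section
/- Define B₀ = { ±(E_{j1} + E_{j4} − E_{j1+1} − E_{j4−1}) : 1 ≤ j1, j1 + 2 ≤ j4 ≤ J } (the moves of B_Λ with j2 = j1 + 1 and j3 = j4 − 1). Then B₀ connects every fiber of the univariate logistic regression model with all column sums positive: for any x, y ∈ ℕ^{2×J} in the same fiber with x_{+j} = y_{+j} > 0 for all j, there is a finite sequence x = x^0, x^1, …, x^n = y of tables in ℕ^{2×J} with x^{i+1} − x^i ∈ B₀ for every i. -/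
/-- B₀ = { ±(E_{j1} + E_{j4} − E_{j1+1} − E_{j4−1}) : 1 ≤ j1, j1+2 ≤ j4 ≤ J },
the moves of B_Λ with j2 = j1 + 1 and j3 = j4 − 1. -/
def LogisB0 (J : ℕ) : Set (Fin 2 → Fin J → ℤ) :=
  {z | ∃ j1 j2 j3 j4 : Fin J,
    (j2 : ℕ) = (j1 : ℕ) + 1 ∧ (j3 : ℕ) + 1 = (j4 : ℕ) ∧ (j1 : ℕ) + 2 ≤ (j4 : ℕ) ∧
    (z = LogisE J j1 + LogisE J j4 - LogisE J j2 - LogisE J j3 ∨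
     z = -(LogisE J j1 + LogisE J j4 - LogisE J j2 - LogisE J j3))}

/-!
A table with column sums `n` is determined by its first row `u ≤ n` (extended by zero to `ℕ`), and
its fiber by `∑ u j` and `∑ (j + 1) u j`. On first rows a move of `B₀` is a squeeze: one unit goes
from column `p` to `p + 1` and one from column `q + 1` to `q`. A squeeze stays in the fiber and
lowers `∑ j² u j`, so every row reduces to a squeeze-free one.

When all column sums are positive, a squeeze-free row has room for at most one more unit strictly
between any two of its nonempty columns. So if `v` lies in the fiber of a squeeze-free `u` and first
differs from it at a column where `v` is smaller, every prefix sum of `v` is at most that of `u`,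
strictly so right after that column; by Abel summation this contradicts
`∑ (j + 1) u j = ∑ (j + 1) v j`. Hence each fiber has a single squeeze-free row, and `x` and `y`
both reduce to it.
-/

open Finset Relation

theorem Relation.ReflTransGen.exists_fin_path {α : Type*} {r : α → α → Prop} {a b : α}
    (h : ReflTransGen r a b) :
    ∃ (m : ℕ) (f : Fin (m + 1) → α), f 0 = a ∧ f (Fin.last m) = b ∧
      ∀ i : Fin m, r (f i.castSucc) (f i.succ) := by
  induction h with
  | refl => exact ⟨0, fun _ => a, rfl, rfl, fun i => i.elim0⟩
  | tail _ hbc ih =>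
    obtain ⟨m, f, h0, hlast, hsteps⟩ := ih
    refine ⟨m + 1, Fin.snoc f _, by simpa using h0, Fin.snoc_last _ _, fun i => ?_⟩
    rcases Fin.eq_castSucc_or_eq_last i with ⟨i, rfl⟩ | rfl
    · rw [Fin.succ_castSucc, Fin.snoc_castSucc, Fin.snoc_castSucc]
      exact hsteps i
    · simpa [hlast] using hbc

namespace LogisticFiber

section Squeeze

variable {J : ℕ} {n u u' v w : ℕ → ℕ}

def SqueezeStep (J : ℕ) (n u u' : ℕ → ℕ) : Prop :=
  u ≤ n ∧ u' ≤ n ∧ ∃ p q, p < q ∧ q + 1 < J ∧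
    u' + Pi.single p 1 + Pi.single (q + 1) 1 = u + Pi.single (p + 1) 1 + Pi.single q 1

def SqueezeFree (J : ℕ) (n u : ℕ → ℕ) : Prop := ∀ u', ¬ SqueezeStep J n u u'

def sufficientStat (J : ℕ) (u : ℕ → ℕ) : ℕ × ℕ :=
  (∑ j ∈ range J, u j, ∑ j ∈ range J, (j + 1) * u j)

theorem sum_mul_add_single (w f : ℕ → ℕ) {p : ℕ} (hp : p < J) :
    ∑ j ∈ range J, w j * (f + Pi.single p 1 : ℕ → ℕ) j = ∑ j ∈ range J, w j * f j + w p := by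
  simp [mul_add, sum_add_distrib, Pi.single_apply, hp]

theorem sum_mul_eq_of_squeeze {p q : ℕ} (hpq : p < q) (hq : q + 1 < J)
    (h : u' + Pi.single p 1 + Pi.single (q + 1) 1 = u + Pi.single (p + 1) 1 + Pi.single q 1)
    (w : ℕ → ℕ) :
    ∑ j ∈ range J, w j * u' j + w p + w (q + 1) = ∑ j ∈ range J, w j * u j + w (p + 1) + w q := by
  have := congrArg (fun f => ∑ j ∈ range J, w j * f j) h
  simpa only [sum_mul_add_single _ _ hq, sum_mul_add_single _ _ (show q < J by omega),
    sum_mul_add_single _ _ (show p < J by omega), sum_mul_add_single _ _ (show p + 1 < J by omega)]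
    using this

theorem SqueezeStep.sufficientStat_eq (h : SqueezeStep J n u u') :
    sufficientStat J u' = sufficientStat J u := by
  obtain ⟨-, -, p, q, hpq, hq, heq⟩ := h
  have hS := sum_mul_eq_of_squeeze hpq hq heq 1
  have hW := sum_mul_eq_of_squeeze hpq hq heq (· + 1)
  simp only [Pi.one_apply, one_mul] at hS
  simp only [sufficientStat, Prod.mk.injEq]
  omega

theorem SqueezeStep.sum_sq_mul_lt (h : SqueezeStep J n u u') :
    ∑ j ∈ range J, j ^ 2 * u' j < ∑ j ∈ range J, j ^ 2 * u j := by
  obtain ⟨-, -, p, q, hpq, hq, heq⟩ := h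
  have := sum_mul_eq_of_squeeze hpq hq heq (· ^ 2)
  nlinarith

theorem sufficientStat_eq_of_reflTransGen (h : ReflTransGen (SqueezeStep J n) u w) :
    sufficientStat J w = sufficientStat J u := by
  induction h with
  | refl => rfl
  | tail _ hstep ih => rw [hstep.sufficientStat_eq, ih]

theorem le_of_reflTransGen (h : ReflTransGen (SqueezeStep J n) u w) (hu : u ≤ n) : w ≤ n := by
  rcases h.cases_tail with rfl | ⟨_, _, hstep⟩
  exacts [hu, hstep.2.1]

theorem exists_reflTransGen_squeezeFree (J : ℕ) (n u : ℕ → ℕ) :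
    ∃ w, ReflTransGen (SqueezeStep J n) u w ∧ SqueezeFree J n w := by
  by_cases hfree : SqueezeFree J n u
  · exact ⟨u, .refl, hfree⟩
  obtain ⟨u', hstep⟩ := not_forall_not.mp hfree
  obtain ⟨w, hw, hwfree⟩ := exists_reflTransGen_squeezeFree J n u'
  exact ⟨w, .head hstep hw, hwfree⟩
termination_by ∑ j ∈ range J, j ^ 2 * u j
decreasing_by exact hstep.sum_sq_mul_lt

theorem exists_squeezeStep_of_room {p q : ℕ} (hpq : p < q) (hq : q + 1 < J) (hu : u ≤ n)
    (hp : 0 < u p) (hq1 : 0 < u (q + 1))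
    (hroom : u + Pi.single (p + 1) 1 + Pi.single q 1 ≤ n + Pi.single p 1 + Pi.single (q + 1) 1) :
    ∃ u', SqueezeStep J n u u' := by
  have hle : Pi.single p 1 + Pi.single (q + 1) 1 ≤ u + Pi.single (p + 1) 1 + Pi.single q 1 := by
    intro j
    simp only [Pi.add_apply, Pi.single_apply]
    split_ifs <;> subst_vars <;> omega
  refine ⟨u + Pi.single (p + 1) 1 + Pi.single q 1 - (Pi.single p 1 + Pi.single (q + 1) 1),
    hu, ?_, p, q, hpq, hq, ?_⟩
  · rwa [tsub_le_iff_right, ← add_assoc]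
  · rw [add_assoc, tsub_add_cancel_of_le hle]

theorem exists_squeezeStep (hn : ∀ j, 0 < n j ↔ j < J) (hu : u ≤ n) {a r : ℕ}
    (ha : 0 < u a) (hr : 0 < u r)
    (hdef : ∑ j ∈ Ico (a + 1) r, u j + 2 ≤ ∑ j ∈ Ico (a + 1) r, n j) :
    ∃ u', SqueezeStep J n u u' := by
  induction hk : r - a using Nat.strong_induction_on generalizing a r with
  | _ k ih =>
  -- Full columns next to `a` or `r` are nonempty, since `n` is positive there: skip past them.
  have hrJ : r < J := (hn r).1 (hr.trans_le (hu r))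
  have har : a + 1 < r := by
    by_contra h
    rw [Ico_eq_empty (by omega)] at hdef
    simp at hdef
  by_cases hleft : u (a + 1) = n (a + 1)
  · rw [sum_eq_sum_Ico_succ_bot har, sum_eq_sum_Ico_succ_bot har, hleft] at hdef
    exact ih _ (by omega) (hleft ▸ (hn _).2 (by omega)) hr (by omega) rfl
  obtain ⟨s, rfl⟩ : ∃ s, r = s + 1 := ⟨r - 1, by omega⟩
  by_cases hright : u s = n s
  · rw [sum_Ico_succ_top (by omega), sum_Ico_succ_top (by omega), hright] at hdef
    exact ih _ (by omega) ha (hright ▸ (hn _).2 (by omega)) (by omega) rfl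
  have hsingle : a + 1 = s → u s + 2 ≤ n s := by
    rintro rfl
    simpa using hdef
  refine exists_squeezeStep_of_room (p := a) (q := s) (by omega) hrJ hu ha hr fun j => ?_
  have h1 : u j ≤ n j := hu j
  have h2 : u (a + 1) ≤ n (a + 1) := hu (a + 1)
  have h3 : u s ≤ n s := hu s
  simp only [Pi.add_apply, Pi.single_apply]
  split_ifs <;> subst_vars <;> omega

theorem SqueezeFree.sum_Ico_le (hfree : SqueezeFree J n u) (hn : ∀ j, 0 < n j ↔ j < J)
    (hu : u ≤ n) {a m r : ℕ} (ha : 0 < u a) (hr : 0 < u r) (hmr : m ≤ r) :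
    ∑ j ∈ Ico (a + 1) m, n j ≤ ∑ j ∈ Ico (a + 1) m, u j + 1 := by
  by_contra! h
  have ham : a + 1 ≤ m := by
    by_contra ham
    rw [Ico_eq_empty (by omega)] at h
    simp at h
  obtain ⟨u', hstep⟩ : ∃ u', SqueezeStep J n u u' := by
    refine exists_squeezeStep hn hu ha hr ?_
    rw [← sum_Ico_consecutive _ ham hmr, ← sum_Ico_consecutive _ ham hmr]
    have := sum_le_sum fun j (_ : j ∈ Ico m r) => hu j
    omega
  exact hfree u' hstep

theorem sum_range_le_of_squeezeFree (hn : ∀ j, 0 < n j ↔ j < J) (hu : u ≤ n) (hv : v ≤ n)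
    (hfree : SqueezeFree J n u) (hsum : ∑ j ∈ range J, v j ≤ ∑ j ∈ range J, u j) {a : ℕ}
    (hagree : ∀ j < a, u j = v j) (hlt : v a < u a) {m : ℕ} (hm : m ≤ J) :
    ∑ j ∈ range m, v j ≤ ∑ j ∈ range m, u j := by
  rcases le_or_gt m a with hma | ham
  · exact (sum_congr rfl fun j hj => (hagree j (by simp at hj; omega)).symm).le
  have hprefix : ∑ j ∈ range a, v j = ∑ j ∈ range a, u j :=
    sum_congr rfl fun j hj => (hagree j (mem_range.1 hj)).symm
  by_cases htail : ∃ r, m ≤ r ∧ 0 < u r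
  · obtain ⟨r, hmr, hr⟩ := htail
    have hdef := hfree.sum_Ico_le hn hu (Nat.zero_lt_of_lt hlt) hr hmr
    have hvn := sum_le_sum fun j (_ : j ∈ Ico (a + 1) m) => hv j
    rw [← sum_range_add_sum_Ico _ (show a + 1 ≤ m from ham),
      ← sum_range_add_sum_Ico _ (show a + 1 ≤ m from ham), sum_range_succ,
      sum_range_succ, hprefix]
    omega
  · push Not at htail
    have hu_eq : ∑ j ∈ range m, u j = ∑ j ∈ range J, u j := by
      rw [← sum_range_add_sum_Ico _ hm,
        sum_eq_zero fun j hj => Nat.le_zero.1 (htail j (mem_Ico.1 hj).1), add_zero]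
    have := sum_le_sum_of_subset (f := v) (range_subset_range.2 hm)
    omega

theorem sum_succ_mul_add_sum_sum_range (u : ℕ → ℕ) (J : ℕ) :
    ∑ j ∈ range J, (j + 1) * u j + ∑ m ∈ range (J + 1), ∑ j ∈ range m, u j =
      (J + 1) * ∑ j ∈ range J, u j := by
  induction J with
  | zero => simp
  | succ J ih =>
    rw [sum_range_succ _ (J + 1), sum_range_succ, sum_range_succ u J]
    linarith

theorem SqueezeFree.le_of_forall_lt_eq (hfree : SqueezeFree J n u) (hn : ∀ j, 0 < n j ↔ j < J)
    (hu : u ≤ n) (hv : v ≤ n) (hstat : sufficientStat J u = sufficientStat J v) {a : ℕ}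
    (hagree : ∀ j < a, u j = v j) : u a ≤ v a := by
  by_contra! hlt
  simp only [sufficientStat, Prod.mk.injEq] at hstat
  obtain ⟨hS, hW⟩ := hstat
  have haJ : a < J := (hn a).1 ((Nat.zero_lt_of_lt hlt).trans_le (hu a))
  have hprefix : ∑ j ∈ range a, v j = ∑ j ∈ range a, u j :=
    sum_congr rfl fun j hj => (hagree j (mem_range.1 hj)).symm
  have hlt' : ∑ m ∈ range (J + 1), ∑ j ∈ range m, v j <
      ∑ m ∈ range (J + 1), ∑ j ∈ range m, u j := by
    refine sum_lt_sum (fun m hm => ?_) ⟨a + 1, by simp; omega, ?_⟩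
    · exact sum_range_le_of_squeezeFree hn hu hv hfree hS.ge hagree hlt (by simp at hm; omega)
    · rw [sum_range_succ, sum_range_succ, hprefix]
      omega
  have hu_abel := sum_succ_mul_add_sum_sum_range u J
  have hv_abel := sum_succ_mul_add_sum_sum_range v J
  rw [hS, hW] at hu_abel
  omega

theorem SqueezeFree.eq (hfu : SqueezeFree J n u) (hfv : SqueezeFree J n v)
    (hn : ∀ j, 0 < n j ↔ j < J) (hu : u ≤ n) (hv : v ≤ n)
    (hstat : sufficientStat J u = sufficientStat J v) : u = v := by
  funext a
  induction a using Nat.strong_induction_on with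
  | _ a ih =>
    exact le_antisymm (hfu.le_of_forall_lt_eq hn hu hv hstat ih)
      (hfv.le_of_forall_lt_eq hn hv hu hstat.symm fun j hj => (ih j hj).symm)

theorem exists_common_reflTransGen (hn : ∀ j, 0 < n j ↔ j < J) (hu : u ≤ n) (hv : v ≤ n)
    (hstat : sufficientStat J u = sufficientStat J v) :
    ∃ w, ReflTransGen (SqueezeStep J n) u w ∧ ReflTransGen (SqueezeStep J n) v w := by
  obtain ⟨wu, hwu, hfu⟩ := exists_reflTransGen_squeezeFree J n u
  obtain ⟨wv, hwv, hfv⟩ := exists_reflTransGen_squeezeFree J n v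
  refine ⟨wu, hwu, ?_⟩
  rwa [hfu.eq hfv hn (le_of_reflTransGen hwu hu) (le_of_reflTransGen hwv hv)
    (by rw [sufficientStat_eq_of_reflTransGen hwu, sufficientStat_eq_of_reflTransGen hwv, hstat])]

end Squeeze

section Tables

variable {J : ℕ}

def natExtend (f : Fin J → ℕ) (j : ℕ) : ℕ := if h : j < J then f ⟨j, h⟩ else 0

@[simp] theorem natExtend_val (f : Fin J → ℕ) (j : Fin J) : natExtend f j = f j := by
  simp [natExtend]

theorem natExtend_pos_iff {f : Fin J → ℕ} (hf : ∀ j, 0 < f j) (j : ℕ) :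
    0 < natExtend f j ↔ j < J := by
  unfold natExtend
  split_ifs with h <;> simp [h, hf]

theorem natExtend_mono {f g : Fin J → ℕ} (h : ∀ j, f j ≤ g j) : natExtend f ≤ natExtend g := by
  intro j
  unfold natExtend
  split_ifs <;> simp [h]

theorem sufficientStat_natExtend (f : Fin J → ℕ) :
    sufficientStat J (natExtend f) = (∑ j, f j, ∑ j : Fin J, ((j : ℕ) + 1) * f j) := by
  simp [sufficientStat, ← Fin.sum_univ_eq_sum_range]

def tableOfRow (n u : ℕ → ℕ) : Fin 2 → Fin J → ℕ := ![fun j => u j, fun j => n j - u j]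

theorem tableOfRow_natExtend (x : Fin 2 → Fin J → ℕ) {n : ℕ → ℕ}
    (hn : ∀ j : Fin J, n j = x 0 j + x 1 j) : tableOfRow n (natExtend (x 0)) = x := by
  funext a j
  fin_cases a <;> simp [tableOfRow, hn]

def B0Step (J : ℕ) (x y : Fin 2 → Fin J → ℕ) : Prop :=
  (fun a j => (y a j : ℤ) - x a j) ∈ LogisB0 J

theorem neg_mem_logisB0 {z : Fin 2 → Fin J → ℤ} (h : z ∈ LogisB0 J) : -z ∈ LogisB0 J := by
  obtain ⟨j1, j2, j3, j4, h2, h3, h4, hz | hz⟩ := h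
  exacts [⟨j1, j2, j3, j4, h2, h3, h4, .inr (by rw [hz])⟩,
    ⟨j1, j2, j3, j4, h2, h3, h4, .inl (by rw [hz, neg_neg])⟩]

instance : Std.Symm (B0Step J) where
  symm x y h := by
    unfold B0Step
    convert neg_mem_logisB0 h using 1
    funext a j
    simp

theorem SqueezeStep.b0Step {n u u' : ℕ → ℕ} (h : SqueezeStep J n u u') :
    B0Step J (tableOfRow n u) (tableOfRow n u') := by
  obtain ⟨hu, hu', p, q, hpq, hq, heq⟩ := h
  refine ⟨⟨p, by omega⟩, ⟨p + 1, by omega⟩, ⟨q, by omega⟩, ⟨q + 1, hq⟩, rfl, rfl,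
    by simp; omega, .inr ?_⟩
  funext a j
  have hj := congrFun heq j
  have h1 : u j ≤ n j := hu j
  have h2 : u' j ≤ n j := hu' j
  simp only [Pi.add_apply, Pi.single_apply] at hj
  fin_cases a <;> simp [tableOfRow, LogisE, Fin.ext_iff, Nat.cast_sub, h1, h2] <;>
    split_ifs at hj ⊢ <;> omega

end Tables

end LogisticFiber

open LogisticFiber

theorem B0_connects_positive_fibers_univariate_logistic_general (J : ℕ)
    (x y : Fin 2 → Fin J → ℕ)
    (hsum : ∑ j : Fin J, x 0 j = ∑ j : Fin J, y 0 j)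
    (hcol : ∀ j : Fin J, x 0 j + x 1 j = y 0 j + y 1 j)
    (hpos : ∀ j : Fin J, 0 < x 0 j + x 1 j)
    (hwsum : ∑ j : Fin J, ((j : ℕ) + 1) * x 0 j
           = ∑ j : Fin J, ((j : ℕ) + 1) * y 0 j) :
    ∃ (n : ℕ) (f : Fin (n + 1) → Fin 2 → Fin J → ℕ),
      f 0 = x ∧ f (Fin.last n) = y ∧
      ∀ i : Fin n,
        (fun a j => (f i.succ a j : ℤ) - (f i.castSucc a j : ℤ)) ∈ LogisB0 J := by
  set n := natExtend fun j => x 0 j + x 1 j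
  have hx : tableOfRow n (natExtend (x 0)) = x := tableOfRow_natExtend x fun j => natExtend_val _ j
  have hy : tableOfRow n (natExtend (y 0)) = y := tableOfRow_natExtend y fun j => by simp [n, hcol]
  obtain ⟨w, hxw, hyw⟩ := exists_common_reflTransGen (natExtend_pos_iff hpos)
    (natExtend_mono fun j => Nat.le_add_right _ _)
    (natExtend_mono fun j => (Nat.le_add_right _ _).trans (hcol j).ge)
    (by simp only [sufficientStat_natExtend, hsum, hwsum])
  have hlift {u v : ℕ → ℕ} (h : ReflTransGen (SqueezeStep J n) u v) :=
    h.lift (tableOfRow n) fun _ _ => SqueezeStep.b0Step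
  rw [← hx, ← hy]
  exact ((hlift hxw).trans (symm_of _ (hlift hyw))).exists_fin_path

/-- B₀ connects every fiber of the univariate logistic
regression model with all column sums positive. -/
theorem B0_connects_positive_fibers_univariate_logistic (J : ℕ) (hJ : 1 ≤ J)
    (x y : Fin 2 → Fin J → ℕ)
    (hsum : ∑ j : Fin J, x 0 j = ∑ j : Fin J, y 0 j)
    (hcol : ∀ j : Fin J, x 0 j + x 1 j = y 0 j + y 1 j)
    (hpos : ∀ j : Fin J, 0 < x 0 j + x 1 j)
    (hwsum : ∑ j : Fin J, ((j : ℕ) + 1) * x 0 j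
           = ∑ j : Fin J, ((j : ℕ) + 1) * y 0 j) :
    ∃ (n : ℕ) (f : Fin (n + 1) → Fin 2 → Fin J → ℕ),
      f 0 = x ∧ f (Fin.last n) = y ∧
      ∀ i : Fin n,
        (fun a j => (f i.succ a j : ℤ) - (f i.castSucc a j : ℤ)) ∈ LogisB0 J :=
  B0_connects_positive_fibers_univariate_logistic_general J x y hsum hcol hpos hwsum
end

section
/- Let ℐ = {1,…,J}×{1,…,K} and let S⁺ and S⁻ be disjoint subsets of ℐ such that: (1) if (j,k) ∈ S⁺, j' ≤ j and k' ≤ k then (j',k') ∈ S⁺; (2) if (j,k) ∈ S⁻, j' ≥ j and k' ≥ k then (j',k') ∈ S⁻; (3) there are no distinct four points (j1,k1) ∈ S⁺, (j2,k2) ∈ S⁻, (j3,k3) ∈ ℐ∖S⁺, (j4,k4) ∈ S⁺ with (j1,k1) − (j2,k2) = (j3,k3) − (j4,k4), and there are no distinct four points (j1,k1) ∈ S⁻, (j2,k2) ∈ S⁺, (j3,k3) ∈ ℐ∖S⁻, (j4,k4) ∈ S⁻ with (j1,k1) − (j2,k2) = (j3,k3) − (j4,k4). Then there exist integers a, b,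 c with (a,b) ≠ (0,0) such that a·j + b·k ≤ c for all (j,k) ∈ S⁺ and a·j + b·k ≥ c for all (j,k) ∈ S⁻. -/
/-!
Write `D = S⁻ - S⁺`. Since `S⁻` is an upper set disjoint from `S⁺`, `D` misses the closed negative
quadrant, so a nonnegative integer functional on `D` exists as soon as every difference in the open
second quadrant makes a clockwise turn (`cross ≤ 0`) to every difference in the open fourth one;
the normal to the flattest second-quadrant difference then works.

For two differences `w - u`, `w - v` with a common point `w ∈ S⁻` this is a descent: otherwise
`w` lies strictly below the chord `uv` of `S⁺`, the first forbidden pattern puts `P = u + v - w`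
into `S⁺`, and `P` replaces `u` or `v` in a smaller configuration. Negating everything gives the
same for a common point of `S⁺`, and the general case reduces to these two through the crossed
differences `w' - u`, `w - u'`, whose sum is that of the original two.
-/

open Set Pointwise

def cross (p q : ℤ × ℤ) : ℤ := p.1 * q.2 - p.2 * q.1

def NoDiffPattern {α : Type*} [Sub α] (A B I : Set α) : Prop :=
  ¬ ∃ p1 p2 p3 p4 : α,
    p1 ∈ A ∧ p2 ∈ B ∧ p3 ∈ I \ A ∧ p4 ∈ A ∧
    p1 ≠ p2 ∧ p1 ≠ p3 ∧ p1 ≠ p4 ∧ p2 ≠ p3 ∧ p2 ≠ p4 ∧ p3 ≠ p4 ∧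
    p1 - p2 = p3 - p4

theorem NoDiffPattern.neg {α : Type*} [AddCommGroup α] {A B I : Set α}
    (h : NoDiffPattern A B I) : NoDiffPattern (-A) (-B) (-I) := by
  rintro ⟨p1, p2, p3, p4, h1, h2, ⟨h3, h3'⟩, h4, h12, h13, h14, h23, h24, h34, hdiff⟩
  refine h ⟨-p1, -p2, -p3, -p4, h1, h2, ⟨h3, h3'⟩, h4, neg_injective.ne h12,
    neg_injective.ne h13, neg_injective.ne h14, neg_injective.ne h23, neg_injective.ne h24,
    neg_injective.ne h34, ?_⟩
  rw [neg_sub_neg, neg_sub_neg, ← neg_sub, hdiff, neg_sub]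

theorem ordConnected_neg {α : Type*} [AddCommGroup α] [PartialOrder α] [IsOrderedAddMonoid α]
    {s : Set α} (hs : s.OrdConnected) : (-s).OrdConnected :=
  hs.preimage_anti fun _ _ h => neg_le_neg h

section Descent

variable {s t : Set ℤ} {A B : Set (ℤ × ℤ)}

theorem not_le_of_mem_of_mem_upper (hA : A ⊆ s ×ˢ t) (hAB : Disjoint A B)
    (hB : ∀ p ∈ B, ∀ q ∈ s ×ˢ t, p ≤ q → q ∈ B) {u w : ℤ × ℤ} (hu : u ∈ A) (hw : w ∈ B) :
    ¬ w ≤ u :=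
  fun h => hAB.notMem_of_mem_left hu (hB w hw u (hA hu) h)

/-- No point of `B` lies strictly below a chord of `A` spanning it. -/
theorem cross_sub_le_zero_of_mem_upper (hs : s.OrdConnected) (ht : t.OrdConnected)
    (hA : A ⊆ s ×ˢ t) (hAB : Disjoint A B) (hB : ∀ p ∈ B, ∀ q ∈ s ×ˢ t, p ≤ q → q ∈ B)
    (hpat : NoDiffPattern A B (s ×ˢ t)) {u v w : ℤ × ℤ} (hu : u ∈ A) (hv : v ∈ A) (hw : w ∈ B)
    (hv1 : w.1 < v.1) (hu2 : w.2 < u.2) : cross (w - v) (w - u) ≤ 0 := by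
  by_contra! hpos
  induction hn : (v.1 - u.1 + (u.2 - v.2)).toNat using Nat.strong_induction_on generalizing u v
    with | _ n ih =>
  have hdom : ∀ {x : ℤ × ℤ}, x ∈ A → ¬ w ≤ x := fun hx =>
    not_le_of_mem_of_mem_upper hA hAB hB hx hw
  have hu1 : u.1 < w.1 := by
    by_contra! h; exact hdom hu (Prod.le_def.2 ⟨h, hu2.le⟩)
  have hv2 : v.2 < w.2 := by
    by_contra! h; exact hdom hv (Prod.le_def.2 ⟨hv1.le, h⟩)
  -- The pattern `u - w = P - v` forces `P ∈ A`; as `w - P = (w - u) + (w - v)`, replacing `u` or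
  -- `v` by `P` keeps the cross product and shrinks the box spanned by the chord.
  set P := u + v - w with hP
  have hP1 : P.1 = u.1 + v.1 - w.1 := rfl
  have hP2 : P.2 = u.2 + v.2 - w.2 := rfl
  have hPw : ¬ P ≤ w := by
    rw [Prod.le_def, hP1, hP2]
    rintro ⟨h1, h2⟩
    simp only [cross, Prod.fst_sub, Prod.snd_sub] at hpos
    nlinarith
  have hPI : P ∈ s ×ˢ t :=
    ⟨hs.out (hA hu).1 (hA hv).1 ⟨by omega, by omega⟩,
      ht.out (hA hv).2 (hA hu).2 ⟨by omega, by omega⟩⟩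
  have hPA : P ∈ A := by
    by_contra hPA
    refine hpat ⟨u, w, P, v, hu, hw, ⟨hPI, hPA⟩, hv, ?_, ?_, ?_, ?_, ?_, ?_, by rw [hP]; abel⟩
    · exact ne_of_apply_ne Prod.fst (by omega)
    · exact ne_of_apply_ne Prod.fst (by omega)
    · exact ne_of_apply_ne Prod.fst (by omega)
    · exact fun h => hPw h.ge
    · exact ne_of_apply_ne Prod.fst (by omega)
    · exact ne_of_apply_ne Prod.fst (by omega)
  have hwP : ¬ w ≤ P := hdom hPA
  rw [Prod.le_def, hP1, hP2] at hPw hwP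
  have hcross_u : cross (w - P) (w - u) = cross (w - v) (w - u) := by
    simp only [cross, Prod.fst_sub, Prod.snd_sub, hP1, hP2]; ring
  have hcross_v : cross (w - v) (w - P) = cross (w - v) (w - u) := by
    simp only [cross, Prod.fst_sub, Prod.snd_sub, hP1, hP2]; ring
  by_cases h1 : w.1 < P.1
  · exact ih _ (by omega) hu hPA (by omega) hu2 (hcross_u ▸ hpos) rfl
  · exact ih _ (by omega) hPA hv hv1 (by omega) (hcross_v ▸ hpos) rfl

theorem cross_sub_le_zero_of_mem_lower (hs : s.OrdConnected) (ht : t.OrdConnected)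
    (hB' : B ⊆ s ×ˢ t) (hAB : Disjoint A B) (hA : ∀ p ∈ A, ∀ q ∈ s ×ˢ t, q ≤ p → q ∈ A)
    (hpat : NoDiffPattern B A (s ×ˢ t)) {u w w' : ℤ × ℤ} (hu : u ∈ A) (hw : w ∈ B)
    (hw' : w' ∈ B) (h1 : w.1 < u.1) (h2 : w'.2 < u.2) : cross (w - u) (w' - u) ≤ 0 := by
  have hneg : -(s ×ˢ t) = (-s) ×ˢ (-t) := by ext; simp
  have key := cross_sub_le_zero_of_mem_upper (A := -B) (B := -A)
    (ordConnected_neg hs) (ordConnected_neg ht)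
    (fun p hp => hneg ▸ hB' hp) (hAB.symm.preimage _)
    (fun p hp q hq hpq =>
      hA (-p) hp (-q) (by rw [← Set.mem_neg, hneg]; exact hq) (neg_le_neg hpq))
    (hneg ▸ hpat.neg) (u := -w') (v := -w) (w := -u)
    (by simpa using hw') (by simpa using hw) (by simpa using hu)
    (by simpa using h1) (by simpa using h2)
  simpa only [neg_sub_neg] using key

end Descent

theorem cross_le_zero_of_quadrants {d d' x : ℤ × ℤ} (hΔ : 0 < cross d d') (hd1 : d.1 < 0)
    (hd2 : 0 ≤ d.2) (hd'1 : 0 < d'.1) (hf : x.2 < 0 → cross d x ≤ 0)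
    (hg : x.1 < 0 → cross x d' ≤ 0) : cross d x ≤ 0 := by
  by_contra! hpos
  rcases lt_or_ge x.1 0 with hx1 | hx1
  · -- `cross d d' * x.1 = cross d x * d'.1 + cross x d' * d.1`
    have hg := hg hx1
    simp only [cross] at *
    nlinarith [mul_pos hpos hd'1, mul_nonneg_of_nonpos_of_nonpos hg hd1.le]
  · rcases lt_or_ge x.2 0 with hx2 | hx2
    · exact (hf hx2).not_gt hpos
    · simp only [cross] at hpos
      nlinarith [mul_nonpos_of_nonpos_of_nonneg hd1.le hx2]

theorem cross_sub_sub_le_zero {A B : Set (ℤ × ℤ)} (hdom : ∀ u ∈ A, ∀ w ∈ B, ¬ w ≤ u)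
    (hB : ∀ w ∈ B, ∀ u ∈ A, ∀ v ∈ A, w.1 < v.1 → w.2 < u.2 → cross (w - v) (w - u) ≤ 0)
    (hA : ∀ u ∈ A, ∀ w ∈ B, ∀ w' ∈ B, w.1 < u.1 → w'.2 < u.2 → cross (w - u) (w' - u) ≤ 0)
    {u u' w w' : ℤ × ℤ} (hu : u ∈ A) (hu' : u' ∈ A) (hw : w ∈ B) (hw' : w' ∈ B)
    (h1 : w.1 < u.1) (h2 : w'.2 < u'.2) : cross (w - u) (w' - u') ≤ 0 := by
  by_contra! hΔ
  have hd2 : 0 ≤ (w - u).2 := by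
    by_contra! h; exact hdom u hu w hw (Prod.le_def.2 ⟨h1.le, sub_nonpos.1 h.le⟩)
  have hd'1 : 0 < (w' - u').1 := by
    by_contra! h; exact hdom u' hu' w' hw' (Prod.le_def.2 ⟨sub_nonpos.1 h, h2.le⟩)
  have h1' : (w - u).1 < 0 := sub_neg.2 h1
  have h3 := cross_le_zero_of_quadrants (x := w' - u) hΔ h1' hd2 hd'1
    (fun h => hA u hu w hw w' hw' h1 (by simpa using h))
    (fun h => hB w' hw' u' hu' u hu (by simpa using h) h2)
  have h4 := cross_le_zero_of_quadrants (x := w - u') hΔ h1' hd2 hd'1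
    (fun h => hB w hw u' hu' u hu h1 (by simpa using h))
    (fun h => hA u' hu' w hw w' hw' (by simpa using h) h2)
  simp only [cross, Prod.fst_sub, Prod.snd_sub] at h3 h4 hΔ
  linarith

theorem exists_nonneg_of_cross_le_zero {D : Set (ℤ × ℤ)} (hD : D.Finite)
    (hneg : ∀ d ∈ D, ¬ d ≤ 0)
    (hcross : ∀ d ∈ D, ∀ d' ∈ D, d.1 < 0 → d'.2 < 0 → cross d d' ≤ 0) :
    ∃ a b : ℤ, (a, b) ≠ (0, 0) ∧ ∀ d ∈ D, 0 ≤ a * d.1 + b * d.2 := by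
  by_cases hleft : ∃ d ∈ D, d.1 < 0
  · -- Normal to the flattest difference in the second quadrant.
    obtain ⟨d₀, ⟨hd₀, hd₀1⟩, hmin⟩ := Set.exists_min_image {d ∈ D | d.1 < 0}
      (fun d => (d.2 : ℚ) / (-d.1)) (hD.subset (sep_subset _ _)) hleft
    have hd₀2 : 0 < d₀.2 := by
      by_contra! h; exact hneg d₀ hd₀ (Prod.le_def.2 ⟨hd₀1.le, h⟩)
    refine ⟨d₀.2, -d₀.1, by simp [hd₀1.ne], fun d hd => ?_⟩
    rcases lt_or_ge d.1 0 with h1 | h1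
    · have h := hmin d ⟨hd, h1⟩
      rw [div_le_div_iff₀ (by exact_mod_cast neg_pos.2 hd₀1) (by exact_mod_cast neg_pos.2 h1)] at h
      have h : d₀.2 * -d.1 ≤ d.2 * -d₀.1 := by exact_mod_cast h
      linarith
    rcases lt_or_ge d.2 0 with h2 | h2
    · have := hcross d₀ hd₀ d hd hd₀1 h2
      simp only [cross] at this
      linarith
    · nlinarith
  · push Not at hleft
    exact ⟨1, 0, by simp, fun d hd => by simpa using hleft d hd⟩

theorem exists_between_of_finite {α : Type*} [LinearOrder α] [Nonempty α] {A B : Set α}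
    (hA : A.Finite) (hB : B.Finite) (h : ∀ a ∈ A, ∀ b ∈ B, a ≤ b) :
    ∃ c, (∀ a ∈ A, a ≤ c) ∧ ∀ b ∈ B, c ≤ b := by
  rcases A.eq_empty_or_nonempty with rfl | hne
  · obtain ⟨c, hc⟩ := hB.bddBelow
    exact ⟨c, by simp, hc⟩
  · obtain ⟨c, hc, hmax⟩ := Set.exists_max_image A id hA hne
    exact ⟨c, hmax, h c hc⟩

theorem separation_lemma_general (J K : ℕ)
    (I Sp Sm : Set (ℤ × ℤ))
    (hI : I = {p : ℤ × ℤ | 1 ≤ p.1 ∧ p.1 ≤ (J : ℤ) ∧ 1 ≤ p.2 ∧ p.2 ≤ (K : ℤ)})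
    (hSp : Sp ⊆ I) (hSm : Sm ⊆ I) (hdisj : Disjoint Sp Sm)
    (hlow : ∀ p ∈ Sp, ∀ q ∈ I, q.1 ≤ p.1 → q.2 ≤ p.2 → q ∈ Sp)
    (hup : ∀ p ∈ Sm, ∀ q ∈ I, p.1 ≤ q.1 → p.2 ≤ q.2 → q ∈ Sm)
    (hpat1 : ¬ ∃ p1 p2 p3 p4 : ℤ × ℤ,
      p1 ∈ Sp ∧ p2 ∈ Sm ∧ p3 ∈ I \ Sp ∧ p4 ∈ Sp ∧
      p1 ≠ p2 ∧ p1 ≠ p3 ∧ p1 ≠ p4 ∧ p2 ≠ p3 ∧ p2 ≠ p4 ∧ p3 ≠ p4 ∧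
      p1 - p2 = p3 - p4)
    (hpat2 : ¬ ∃ p1 p2 p3 p4 : ℤ × ℤ,
      p1 ∈ Sm ∧ p2 ∈ Sp ∧ p3 ∈ I \ Sm ∧ p4 ∈ Sm ∧
      p1 ≠ p2 ∧ p1 ≠ p3 ∧ p1 ≠ p4 ∧ p2 ≠ p3 ∧ p2 ≠ p4 ∧ p3 ≠ p4 ∧
      p1 - p2 = p3 - p4) :
    ∃ a b c : ℤ, (a, b) ≠ (0, 0) ∧
      (∀ p ∈ Sp, a * p.1 + b * p.2 ≤ c) ∧
      (∀ p ∈ Sm, c ≤ a * p.1 + b * p.2) := by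
  obtain rfl : I = (Icc 1 (J : ℤ)) ×ˢ (Icc 1 (K : ℤ)) := by
    rw [hI]; ext p; simp [-Icc_prod_Icc, and_assoc]
  have hup' : ∀ p ∈ Sm, ∀ q ∈ _, p ≤ q → q ∈ Sm := fun p hp q hq h => hup p hp q hq h.1 h.2
  have hlow' : ∀ p ∈ Sp, ∀ q ∈ _, q ≤ p → q ∈ Sp := fun p hp q hq h => hlow p hp q hq h.1 h.2
  have hdom : ∀ u ∈ Sp, ∀ w ∈ Sm, ¬ w ≤ u := fun u hu w hw =>
    not_le_of_mem_of_mem_upper hSp hdisj hup' hu hw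
  have hIfin := (finite_Icc 1 (J : ℤ)).prod (finite_Icc 1 (K : ℤ))
  obtain ⟨a, b, hab, hD⟩ := exists_nonneg_of_cross_le_zero (D := Sm - Sp)
    ((hIfin.subset hSm).sub (hIfin.subset hSp))
    (by rintro _ ⟨w, hw, u, hu, rfl⟩ h; exact hdom u hu w hw (sub_nonpos.1 h))
    (by
      rintro _ ⟨w, hw, u, hu, rfl⟩ _ ⟨w', hw', u', hu', rfl⟩ h1 h2
      exact cross_sub_sub_le_zero hdom
        (fun w hw u hu v hv => cross_sub_le_zero_of_mem_upper ordConnected_Icc ordConnected_Icc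
          hSp hdisj hup' hpat1 hu hv hw)
        (fun u hu w hw w' hw' => cross_sub_le_zero_of_mem_lower ordConnected_Icc ordConnected_Icc
          hSm hdisj hlow' hpat2 hu hw hw')
        hu hu' hw hw' (by simpa using h1) (by simpa using h2))
  obtain ⟨c, hSpc, hSmc⟩ := exists_between_of_finite
    ((hIfin.subset hSp).image fun p => a * p.1 + b * p.2)
    ((hIfin.subset hSm).image fun p => a * p.1 + b * p.2) (by
      rintro _ ⟨u, hu, rfl⟩ _ ⟨w, hw, rfl⟩
      have := hD (w - u) ⟨w, hw, u, hu, rfl⟩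
      simp only [Prod.fst_sub, Prod.snd_sub] at this
      linarith)
  exact ⟨a, b, c, hab, fun p hp => hSpc _ ⟨p, hp, rfl⟩, fun p hp => hSmc _ ⟨p, hp, rfl⟩⟩

/-- separation lemma: if S⁺ and S⁻ are disjoint subsets of the
grid ℐ = {1,…,J}×{1,…,K} ⊂ ℤ², S⁺ is a lower set, S⁻ is an upper set, and
neither of the two forbidden four-point difference patterns occurs, then S⁺
and S⁻ are separated by a line with integer coefficients. -/
theorem separation_lemma (J K : ℕ) (hJ : 1 ≤ J) (hK : 1 ≤ K)
    (I Sp Sm : Set (ℤ × ℤ))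
    (hI : I = {p : ℤ × ℤ | 1 ≤ p.1 ∧ p.1 ≤ (J : ℤ) ∧ 1 ≤ p.2 ∧ p.2 ≤ (K : ℤ)})
    (hSp : Sp ⊆ I) (hSm : Sm ⊆ I) (hdisj : Disjoint Sp Sm)
    (hlow : ∀ p ∈ Sp, ∀ q ∈ I, q.1 ≤ p.1 → q.2 ≤ p.2 → q ∈ Sp)
    (hup : ∀ p ∈ Sm, ∀ q ∈ I, p.1 ≤ q.1 → p.2 ≤ q.2 → q ∈ Sm)
    (hpat1 : ¬ ∃ p1 p2 p3 p4 : ℤ × ℤ,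
      p1 ∈ Sp ∧ p2 ∈ Sm ∧ p3 ∈ I \ Sp ∧ p4 ∈ Sp ∧
      p1 ≠ p2 ∧ p1 ≠ p3 ∧ p1 ≠ p4 ∧ p2 ≠ p3 ∧ p2 ≠ p4 ∧ p3 ≠ p4 ∧
      p1 - p2 = p3 - p4)
    (hpat2 : ¬ ∃ p1 p2 p3 p4 : ℤ × ℤ,
      p1 ∈ Sm ∧ p2 ∈ Sp ∧ p3 ∈ I \ Sm ∧ p4 ∈ Sm ∧
      p1 ≠ p2 ∧ p1 ≠ p3 ∧ p1 ≠ p4 ∧ p2 ≠ p3 ∧ p2 ≠ p4 ∧ p3 ≠ p4 ∧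
      p1 - p2 = p3 - p4) :
    ∃ a b c : ℤ, (a, b) ≠ (0, 0) ∧
      (∀ p ∈ Sp, a * p.1 + b * p.2 ≤ c) ∧
      (∀ p ∈ Sm, c ≤ a * p.1 + b * p.2) :=
  separation_lemma_general J K I Sp Sm hI hSp hSm hdisj hlow hup hpat1 hpat2
end

section
/- Let z ∈ ℤ^{J×K} satisfy Σ_{j,k} z_{jk} = 0, Σ_{j,k} j·z_{jk} = 0 and Σ_{j,k} k·z_{jk} = 0, and suppose there are integers a, b, c such that z_{jk} > 0 implies a·j + b·k ≤ c and z_{jk} < 0 implies a·j + b·k ≥ c. Then z_{jk} ≠ 0 implies a·j + b·k = c; that is, the support of z is contained in the separating line. -/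
/-! Weighting each entry of `z` by its signed distance `c - (a j + b k)` from the line gives
nonnegative terms by the separation hypothesis, while the three moment conditions make their total
`c ∑ z - a ∑ j z - b ∑ k z` vanish. So every term vanishes, and an entry with `z_{jk} ≠ 0` must lie
on the line. -/

section Separation

variable {ι R : Type*} [Ring R] [LinearOrder R] [IsStrictOrderedRing R]

theorem sub_mul_nonneg_of_separated {x c z : R} (hpos : 0 < z → x ≤ c) (hneg : z < 0 → c ≤ x) :
    0 ≤ (c - x) * z := by
  rcases lt_trichotomy z 0 with hz | hz | hz
  · exact mul_nonneg_of_nonpos_of_nonpos (sub_nonpos.mpr (hneg hz)) hz.le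
  · simp [hz]
  · exact mul_nonneg (sub_nonneg.mpr (hpos hz)) hz.le

theorem eq_of_ne_zero_of_separated [Fintype ι] {ℓ z : ι → R} {c : R}
    (hpos : ∀ i, 0 < z i → ℓ i ≤ c) (hneg : ∀ i, z i < 0 → c ≤ ℓ i)
    (hsum : ∑ i, (c - ℓ i) * z i = 0) {i : ι} (hi : z i ≠ 0) : ℓ i = c := by
  have hterms := (Finset.sum_eq_zero_iff_of_nonneg fun i _ =>
    sub_mul_nonneg_of_separated (hpos i) (hneg i)).mp hsum
  have hterm : (c - ℓ i) * z i = 0 := hterms i (Finset.mem_univ i)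
  exact (sub_eq_zero.mp ((mul_eq_zero.mp hterm).resolve_right hi)).symm

end Separation

/-- if z ∈ ℤ^{J×K} has zero sum and zero weighted sums in both
coordinates, and a line a·j + b·k = c weakly separates the positive support
of z from the negative support, then the whole support of z lies on the line.
Levels are represented by `j : Fin J`, `k : Fin K` with values
`(j : ℕ) + 1`, `(k : ℕ) + 1`. -/
theorem support_on_separating_line (J K : ℕ)
    (z : Fin J → Fin K → ℤ)
    (hsum : ∑ j : Fin J, ∑ k : Fin K, z j k = 0)
    (hj : ∑ j : Fin J, ∑ k : Fin K, (((j : ℕ) : ℤ) + 1) * z j k = 0)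
    (hk : ∑ j : Fin J, ∑ k : Fin K, (((k : ℕ) : ℤ) + 1) * z j k = 0)
    (a b c : ℤ)
    (hpos : ∀ (j : Fin J) (k : Fin K), 0 < z j k →
      a * (((j : ℕ) : ℤ) + 1) + b * (((k : ℕ) : ℤ) + 1) ≤ c)
    (hneg : ∀ (j : Fin J) (k : Fin K), z j k < 0 →
      c ≤ a * (((j : ℕ) : ℤ) + 1) + b * (((k : ℕ) : ℤ) + 1)) :
    ∀ (j : Fin J) (k : Fin K), z j k ≠ 0 →
      a * (((j : ℕ) : ℤ) + 1) + b * (((k : ℕ) : ℤ) + 1) = c := by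
  intro j k hz
  set ℓ : Fin J × Fin K → ℤ := fun p => a * (((p.1 : ℕ) : ℤ) + 1) + b * (((p.2 : ℕ) : ℤ) + 1)
  have hmoment : ∑ p, (c - ℓ p) * z p.1 p.2 = 0 :=
    calc ∑ p, (c - ℓ p) * z p.1 p.2
        = c * ∑ j : Fin J, ∑ k : Fin K, z j k
          - a * ∑ j : Fin J, ∑ k : Fin K, (((j : ℕ) : ℤ) + 1) * z j k
          - b * ∑ j : Fin J, ∑ k : Fin K, (((k : ℕ) : ℤ) + 1) * z j k := by
          simp only [Fintype.sum_prod_type, Finset.mul_sum, ← Finset.sum_sub_distrib]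
          exact Finset.sum_congr rfl fun j _ => Finset.sum_congr rfl fun k _ => by ring
      _ = 0 := by rw [hsum, hj, hk]; ring
  exact eq_of_ne_zero_of_separated (z := fun p => z p.1 p.2)
    (fun p => hpos p.1 p.2) (fun p => hneg p.1 p.2) hmoment (i := (j, k)) hz
end
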